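/- arXiv:1001.0903 — 12 statements merged into one kernel-verified Lean document; each statement's English description precedes it below -/
import Mathlib

section
/- Every kaleidoscopical configuration A in a group G (viewed as a G-space under the left regular action) is complemented: there exists B ⊆ G such that the multiplication map A × B → G, (a,b) ↦ ab, is bijective. -/
open Pointwise

universe u

/-- Every kaleidoscopical configuration `A` in a group `G` (with the left
regular action) is complemented: there exists `B ⊆ G` such that `(a,b) ↦ ab` is a
bijection from `A × B` onto `G`. -/
theorem stmt2 {G : Type u} [Group G] (A : Set G)
    (h : ∃ (C : Type u) (χ : G → C), Function.Surjective χ ∧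
        ∀ g : G, Set.BijOn χ (g • A) Set.univ) :
    ∃ B : Set G, Function.Bijective (fun p : A × B => (p.1 : G) * (p.2 : G)) := by
  obtain ⟨C, χ, hsurj, hbij⟩ := h
  refine ⟨{x : G | χ x⁻¹ = χ 1}, ?_, ?_⟩
  · rintro ⟨⟨a₁, ha₁⟩, ⟨b₁, hb₁⟩⟩ ⟨⟨a₂, ha₂⟩, ⟨b₂, hb₂⟩⟩ heq
    simp only at heq
    set g := a₁ * b₁ with hg
    have hg2 : a₂ * b₂ = g := heq.symm
    have hm1 : g⁻¹ • a₁ ∈ g⁻¹ • A := Set.smul_mem_smul_set ha₁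
    have hm2 : g⁻¹ • a₂ ∈ g⁻¹ • A := Set.smul_mem_smul_set ha₂
    have e1 : g⁻¹ • a₁ = b₁⁻¹ := by
      simp only [smul_eq_mul, hg, mul_inv_rev]
      group
    have e2 : g⁻¹ • a₂ = b₂⁻¹ := by
      simp only [smul_eq_mul, ← hg2, mul_inv_rev]
      group
    have hχ : χ (g⁻¹ • a₁) = χ (g⁻¹ • a₂) := by
      rw [e1, e2, hb₁, hb₂]
    have := (hbij g⁻¹).injOn hm1 hm2 hχ
    have ha : a₁ = a₂ := by
      have := congrArg (fun x => g • x) this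
      simpa [smul_smul] using this
    have hb : b₁ = b₂ := by
      have : b₁⁻¹ = b₂⁻¹ := by rw [← e1, ← e2, ha]
      exact inv_injective this
    simp [Prod.ext_iff, Subtype.ext_iff, ha, hb]
  · intro g
    have : χ 1 ∈ χ '' (g⁻¹ • A) := (hbij g⁻¹).surjOn (Set.mem_univ _)
    obtain ⟨x, hx, hχx⟩ := this
    obtain ⟨a, ha, rfl⟩ := hx
    refine ⟨⟨⟨a, ha⟩, ⟨a⁻¹ * g, ?_⟩⟩, ?_⟩
    · show χ (a⁻¹ * g)⁻¹ = χ 1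
      rw [← hχx]
      congr 1
      simp [smul_eq_mul, mul_inv_rev]
    · simp
end

section
/- A subset A of a group G is doubly complemented if and only if A is a homogeneous kaleidoscopical configuration in G, i.e. A is a kaleidoscopical configuration and there exist a G[A]-transversal T and a subset H ⊆ G such that G is the disjoint union of the family {hT : h ∈ H}. -/
open Pointwise

universe u

/-- `G = AB` is a factorization of the group `G`. -/
def IsFactorization {G : Type u} [Group G] (A B : Set G) : Prop :=
  Function.Bijective (fun p : A × B => (p.1 : G) * (p.2 : G))

/-- `A` is a kaleidoscopical configuration in the group `G` with the left regular
action. -/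
def IsKaleidoscopical {G : Type u} [Group G] (A : Set G) : Prop :=
  ∃ (C : Type u) (χ : G → C), Function.Surjective χ ∧
    ∀ g : G, Set.BijOn χ (g • A) Set.univ

lemma myFactIff {G : Type u} [Group G] (A B : Set G) :
    IsFactorization A B ↔ ∀ g : G, ∃! p : A × B, (p.1 : G) * (p.2 : G) = g :=
  Function.bijective_iff_existsUnique _

lemma kale_of {G : Type u} [Group G] (A T H : Set G)
    (hT : ∀ g : G, ∃! x, x ∈ (g • A) ∩ T)
    (hH : ∀ x : G, ∃! h, h ∈ H ∧ x ∈ h • T) :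
    IsKaleidoscopical A := by
  refine ⟨↥H, fun x => ⟨(hH x).choose, (hH x).choose_spec.1.1⟩, ?_, ?_⟩
  · intro c
    obtain ⟨t, ht, -⟩ := hT 1
    refine ⟨(c : G) * t, Subtype.ext ?_⟩
    have hc : (c : G) ∈ H ∧ (c : G) * t ∈ (c : G) • T :=
      ⟨c.2, ⟨t, ht.2, rfl⟩⟩
    exact ((hH ((c : G) * t)).choose_spec.2 _ hc).symm
  · intro g
    refine ⟨fun x _ => Set.mem_univ _, ?_, ?_⟩
    · -- InjOn
      intro x hx y hy hxy
      set h := (hH x).choose with hh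
      have hx' : x ∈ h • T := (hH x).choose_spec.1.2
      have hy' : y ∈ h • T := by
        have e : (hH y).choose = h := (congrArg Subtype.val hxy).symm
        exact e ▸ (hH y).choose_spec.1.2
      have key : ∀ z : G, z ∈ g • A → z ∈ h • T →
          h⁻¹ * z ∈ ((h⁻¹ * g) • A) ∩ T := by
        intro z hz1 hz2
        constructor
        · rw [mul_smul]
          exact ⟨z, hz1, by simp [smul_eq_mul]⟩
        · rcases hz2 with ⟨t, htT, rfl⟩
          simpa [smul_eq_mul] using htT
      have e := ((hT (h⁻¹ * g)).unique (key x hx hx') (key y hy hy'))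
      exact mul_left_cancel e
    · -- SurjOn
      intro c _
      obtain ⟨x, hx, -⟩ := hT ((c : G)⁻¹ * g)
      refine ⟨(c : G) * x, ?_, ?_⟩
      · rcases hx.1 with ⟨a, ha, rfl⟩
        exact ⟨a, ha, by simp [smul_eq_mul, mul_assoc]⟩
      · refine Subtype.ext ?_
        have hc : (c : G) ∈ H ∧ (c : G) * x ∈ (c : G) • T :=
          ⟨c.2, ⟨x, hx.2, rfl⟩⟩
        exact ((hH ((c : G) * x)).choose_spec.2 _ hc).symm

/-- A subset `A` of a group `G` is doubly complemented (there are
factorizations `G = AB` and `G = BC`) if and only if `A` is a homogeneous kaleidoscopical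
configuration: `A` is kaleidoscopical and there are a `G[A]`-transversal `T` and a set
`H ⊆ G` such that `G` is the disjoint union of the family `{hT : h ∈ H}`. -/
theorem stmt3 {G : Type u} [Group G] (A : Set G) :
    (∃ B C : Set G, IsFactorization A B ∧ IsFactorization B C) ↔
    (IsKaleidoscopical A ∧
      ∃ T H : Set G, (∀ g : G, ∃! x, x ∈ (g • A) ∩ T) ∧
        (∀ x : G, ∃! h, h ∈ H ∧ x ∈ h • T)) := by
  constructor
  · rintro ⟨B, C, hAB, hBC⟩
    rw [myFactIff] at hAB hBC
    have hT : ∀ g : G, ∃! x, x ∈ (g • A) ∩ B⁻¹ := by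
      intro g
      obtain ⟨p, hp, hpu⟩ := hAB g⁻¹
      refine ⟨(p.2 : G)⁻¹, ⟨⟨p.1, p.1.2, ?_⟩, ?_⟩, ?_⟩
      · have : (p.2 : G) = (p.1 : G)⁻¹ * g⁻¹ := by
          rw [← hp]; group
        rw [this]; simp [smul_eq_mul]
      · simp [Set.mem_inv]
      · rintro y ⟨⟨a, haA, rfl⟩, hyB⟩
        have hy : (g * a)⁻¹ ∈ B := hyB
        have := hpu (⟨⟨a, haA⟩, ⟨(g * a)⁻¹, hy⟩⟩) (by simp)
        have h2 : ((g * a)⁻¹ : G) = (p.2 : G) := congrArg (fun q : A × B => (q.2 : G)) this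
        rw [← h2, inv_inv]
        simp [smul_eq_mul]
    have hH : ∀ x : G, ∃! h, h ∈ C⁻¹ ∧ x ∈ h • B⁻¹ := by
      intro x
      obtain ⟨q, hq, hqu⟩ := hBC x⁻¹
      refine ⟨(q.2 : G)⁻¹, ⟨by simp [Set.mem_inv], ?_⟩, ?_⟩
      · refine ⟨(q.1 : G)⁻¹, by simp [Set.mem_inv], ?_⟩
        simp [smul_eq_mul]
        rw [← mul_inv_rev, hq, inv_inv]
      · rintro h ⟨hhC, t, htB, rfl⟩
        have hb : t⁻¹ ∈ B := htB
        have hc : h⁻¹ ∈ C := hhC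
        have := hqu (⟨⟨t⁻¹, hb⟩, ⟨h⁻¹, hc⟩⟩) (by simp [smul_eq_mul])
        have h2 : (h⁻¹ : G) = (q.2 : G) := congrArg (fun q : B × C => (q.2 : G)) this
        rw [← h2, inv_inv]
    exact ⟨kale_of A B⁻¹ C⁻¹ hT hH, B⁻¹, C⁻¹, hT, hH⟩
  · rintro ⟨-, T, H, hT, hH⟩
    refine ⟨T⁻¹, H⁻¹, (myFactIff _ _).2 ?_, (myFactIff _ _).2 ?_⟩
    · intro g
      obtain ⟨x, ⟨hxA, hxT⟩, hxu⟩ := hT g⁻¹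
      have hgx : g * x ∈ A := by
        rcases hxA with ⟨a, ha, rfl⟩
        simpa [smul_eq_mul, ← mul_assoc] using ha
      refine ⟨⟨⟨g * x, hgx⟩, ⟨x⁻¹, by simpa using hxT⟩⟩, by simp, ?_⟩
      rintro ⟨⟨a, haA⟩, ⟨b, hbT⟩⟩ hab
      simp only at hab
      have hb : b⁻¹ ∈ T := hbT
      have hbx : b⁻¹ = x := by
        refine hxu _ ⟨⟨a, haA, ?_⟩, hb⟩
        simp [smul_eq_mul]; rw [← hab]; group
      have ha' : a = g * x := by rw [← hbx, ← hab]; group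
      simp [Prod.ext_iff, Subtype.ext_iff, ha', ← hbx]
    · intro g
      obtain ⟨h, ⟨hhH, hgT⟩, hhu⟩ := hH g⁻¹
      have ht : h⁻¹ * g⁻¹ ∈ T := by
        rcases hgT with ⟨t, htT, heq⟩
        have : t = h⁻¹ * g⁻¹ := by simp only [smul_eq_mul] at heq; rw [← heq]; group
        exact this ▸ htT
      refine ⟨⟨⟨(h⁻¹ * g⁻¹)⁻¹, by simpa using ht⟩, ⟨h⁻¹, by simpa using hhH⟩⟩,
        by simp, ?_⟩
      rintro ⟨⟨b, hbT⟩, ⟨c, hcH⟩⟩ hbc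
      simp only at hbc
      have hc' : c⁻¹ ∈ H := hcH
      have hch : c⁻¹ = h := by
        refine hhu _ ⟨hc', ⟨b⁻¹, hbT, ?_⟩⟩
        simp [smul_eq_mul]; rw [← hbc]; group
      have hb' : b = (h⁻¹ * g⁻¹)⁻¹ := by
        have hcv : c = h⁻¹ := by rw [← hch, inv_inv]
        rw [← hbc, hcv]; group
      have hc2 : c = h⁻¹ := by rw [← hch, inv_inv]
      simp [Prod.ext_iff, Subtype.ext_iff, hb', hc2]
end

section
/- Let X be a transitive G-space, x ∈ X, G_x = {g ∈ G : gx = x} the stabilizer of x, γ_x : G → X the orbit map γ_x(g) = gx, and s : X → G a section of γ_x (i.e. γ_x ∘ s = id_X). Let A ⊆ X and let T be a G[A]-transversal. Then: (1) s(T) is a G[γ_x⁻¹(A)]-transversal in the group G with the left regular action; (2) |G| = |G_x| · |A| · |T| (as cardinals). -/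
open Pointwise

universe u

/-- Let `X` be a transitive `G`-space, `x ∈ X`, `G_x` the stabilizer of `x`,
`γ_x : G → X`, `γ_x(g) = g • x`, and `s : X → G` a section of `γ_x`. Let `A ⊆ X` and let
`T` be a `G[A]`-transversal. Then (1) `s(T)` is a `G[γ_x⁻¹(A)]`-transversal in the group
`G` with the left regular action, and (2) `|G| = |G_x| ⬝ |A| ⬝ |T|` as cardinals. -/
theorem stmt5 {G X : Type u} [Group G] [MulAction G X]
    (htrans : ∀ x y : X, ∃ g : G, g • x = y)
    (x : X) (s : X → G) (hs : ∀ y : X, s y • x = y)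
    (A T : Set X)
    (hT : ∀ g : G, ∃! t, t ∈ (g • A) ∩ T) :
    (∀ g : G, ∃! t, t ∈ (g • ((fun h : G => h • x) ⁻¹' A)) ∩ (s '' T)) ∧
      Cardinal.mk G =
        Cardinal.mk (MulAction.stabilizer G x) * Cardinal.mk A * Cardinal.mk T := by
  classical
  constructor
  · intro g
    obtain ⟨t, ⟨htA, htT⟩, huniq⟩ := hT g
    refine ⟨s t, ⟨?_, ⟨t, htT, rfl⟩⟩, ?_⟩
    · rw [Set.mem_smul_set_iff_inv_smul_mem]
      show (g⁻¹ • s t) • x ∈ A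
      have : (g⁻¹ • s t) • x = g⁻¹ • t := by
        rw [smul_eq_mul, mul_smul, hs]
      rw [this]
      exact Set.mem_smul_set_iff_inv_smul_mem.mp htA
    · rintro k ⟨hk1, ⟨t', ht'T, rfl⟩⟩
      have hmem : t' ∈ (g • A) ∩ T := by
        refine ⟨?_, ht'T⟩
        have h2 := Set.mem_smul_set_iff_inv_smul_mem.mp hk1
        have h3 : (g⁻¹ • s t') • x ∈ A := h2
        rw [smul_eq_mul, mul_smul, hs] at h3
        exact Set.mem_smul_set_iff_inv_smul_mem.mpr h3
      rw [huniq t' hmem]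
  · have key : ∀ (h : MulAction.stabilizer G x) (a : A) (t : X),
        (s t * (h : G) * (s (a : X))⁻¹) • (a : X) = t := by
      intro h a t
      have h1 : (s (a : X))⁻¹ • (a : X) = x := by
        rw [inv_smul_eq_iff, hs]
      rw [mul_smul, mul_smul, h1, h.2, hs]
    have hbij : Function.Bijective
        (fun p : MulAction.stabilizer G x × A × T =>
          s (p.2.2 : X) * (p.1 : G) * (s (p.2.1 : X))⁻¹) := by
      constructor
      · rintro ⟨h, a, t⟩ ⟨h', a', t'⟩ heq
        simp only at heq
        set g := s (t : X) * (h : G) * (s (a : X))⁻¹ with hg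
        have ht1 : g • (a : X) = t := key h a t
        have ht2 : g • (a' : X) = t' := heq ▸ key h' a' t'
        have hmt : (t : X) ∈ (g • A) ∩ T := ⟨⟨a, a.2, ht1⟩, t.2⟩
        have hmt' : (t' : X) ∈ (g • A) ∩ T := ⟨⟨a', a'.2, ht2⟩, t'.2⟩
        obtain ⟨u, hu, huniq⟩ := hT g
        have htt' : (t : X) = (t' : X) := by
          rw [huniq _ hmt, huniq _ hmt']
        have haa' : (a : X) = (a' : X) := by
          have := ht2
          rw [← htt', ← ht1] at this
          exact (smul_left_cancel g this.symm)
        have hhh' : (h : G) = (h' : G) := by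
          have h5 : s (t : X) * (h : G) * (s (a : X))⁻¹ = s (t' : X) * (h' : G) * (s (a' : X))⁻¹ := heq
          rw [haa', htt'] at h5
          exact mul_left_cancel (mul_right_cancel h5)
        exact Prod.ext (Subtype.ext hhh') (Prod.ext (Subtype.ext haa') (Subtype.ext htt'))
      · intro g
        obtain ⟨t, ⟨⟨a, haA, hat⟩, htT⟩, _⟩ := hT g
        have hga : g⁻¹ • t = a := by rw [← hat, inv_smul_smul]
        have hat' : g • a = t := hat
        have hstab : (s t)⁻¹ * g * s a ∈ MulAction.stabilizer G x := by
          rw [MulAction.mem_stabilizer_iff, mul_smul, mul_smul, hs, hat',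
            inv_smul_eq_iff, hs]
        refine ⟨⟨⟨(s t)⁻¹ * g * s a, hstab⟩, ⟨a, haA⟩, ⟨t, htT⟩⟩, ?_⟩
        simp only
        group
    have e := Equiv.ofBijective _ hbij
    rw [← Cardinal.mk_congr e]
    simp [Cardinal.mk_prod, mul_assoc]
end

section
/- Let A be a kaleidoscopical configuration in a finite transitive G-space X, and let χ : X → C be a coloring (a surjection onto a finite set C) whose restriction to gA is a bijection onto C for every g ∈ G. Then all color classes have the same size, i.e. |χ⁻¹(c)| = |χ⁻¹(c')| for all c, c' ∈ C, and |X| = |A| · |χ⁻¹(c)| for every c ∈ C. In particular, |A| divides |X|. -/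
open Pointwise

universe u v w

/-- Let `A` be a kaleidoscopical configuration in a finite transitive
`G`-space `X` with a kaleidoscopical coloring `χ : X → C` (a surjection onto a finite set
`C` whose restriction to every translate `gA` is a bijection onto `C`). Then all color
classes have the same size, `|X| = |A| ⬝ |χ⁻¹(c)|` for every `c ∈ C`, and in particular
`|A|` divides `|X|`. -/
theorem stmt6 {G : Type u} {X : Type v} [Group G] [MulAction G X] [Finite X]
    (htrans : ∀ x y : X, ∃ g : G, g • x = y)
    (A : Set X) {C : Type w} [Finite C] (χ : X → C)
    (hsurj : Function.Surjective χ)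
    (hk : ∀ g : G, Set.BijOn χ (g • A) Set.univ) :
    (∀ c c' : C, Nat.card ↥(χ ⁻¹' {c}) = Nat.card ↥(χ ⁻¹' {c'})) ∧
    (∀ c : C, Nat.card X = Nat.card ↥A * Nat.card ↥(χ ⁻¹' {c})) ∧
    Nat.card ↥A ∣ Nat.card X := by
  classical
  rcases isEmpty_or_nonempty X with hX | hX
  · have hC : IsEmpty C := ⟨fun c => by obtain ⟨x, -⟩ := hsurj c; exact hX.false x⟩
    refine ⟨fun c => (hC.false c).elim, fun c => (hC.false c).elim, ?_⟩
    have : Nat.card X = 0 := by simp [Nat.card_eq_zero]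
    rw [this]
    exact dvd_zero _
  · letI : Fintype X := Fintype.ofFinite X
    letI : Fintype C := Fintype.ofFinite C
    set π := MulAction.toPermHom G X with hπ
    set H := π.range with hH
    letI : Fintype H := Fintype.ofFinite H
    -- translated hypotheses
    have hk' : ∀ h : H, Set.BijOn χ ((h : Equiv.Perm X) '' A) Set.univ := by
      rintro ⟨-, g, rfl⟩
      have he : (π g : Equiv.Perm X) '' A = g • A := by
        ext x
        simp [Set.mem_smul_set, hπ, MulAction.toPermHom, MulAction.toPerm]
      simpa [he] using hk g
    have htrans' : ∀ x y : X, ∃ h : H, (h : Equiv.Perm X) x = y := by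
      intro x y
      obtain ⟨g, hg⟩ := htrans x y
      exact ⟨⟨π g, ⟨g, rfl⟩⟩, hg⟩
    -- the set of translates containing x
    let T : X → Finset H := fun x => Finset.univ.filter fun h => (h : Equiv.Perm X).symm x ∈ A
    have hmemT : ∀ (x : X) (h : H), h ∈ T x ↔ (h : Equiv.Perm X).symm x ∈ A := by
      intro x h; simp [T]
    have himg : ∀ (h : H) (x : X), x ∈ (h : Equiv.Perm X) '' A ↔ (h : Equiv.Perm X).symm x ∈ A := by
      intro h x
      constructor
      · rintro ⟨a, ha, rfl⟩; simpa using ha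
      · intro ha; exact ⟨_, ha, Equiv.apply_symm_apply _ _⟩
    have hsm : ∀ (k h : H) (y : X),
        ((k * h : H) : Equiv.Perm X).symm y
          = (h : Equiv.Perm X).symm ((k : Equiv.Perm X).symm y) := by
      intro k h y
      rw [Equiv.symm_apply_eq]
      simp [Equiv.Perm.mul_apply]
    -- constancy of (T x).card
    have hconst : ∀ x y : X, (T x).card = (T y).card := by
      intro x y
      obtain ⟨k, hk0⟩ := htrans' x y
      have hk0' : (k : Equiv.Perm X).symm y = x := by
        rw [← hk0]; exact Equiv.symm_apply_apply _ _
      refine Finset.card_bij' (fun h _ => k * h) (fun h _ => k⁻¹ * h) ?_ ?_ ?_ ?_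
      · intro h hh
        rw [hmemT] at hh ⊢
        rw [hsm, hk0']
        exact hh
      · intro h hh
        rw [hmemT] at hh ⊢
        rw [hsm]
        have h2 : ((k : Equiv.Perm X)⁻¹).symm x = y := by
          simp [Equiv.Perm.inv_def, hk0]
        simpa [h2] using hh
      · intro h _; group
      · intro h _; group
    -- first count : ∑ x, (T x).card = |H| * |A|
    have hsum1 : ∑ x : X, (T x).card = Fintype.card H * A.toFinset.card := by
      calc ∑ x : X, (T x).card
          = ∑ x : X, ∑ h : H, if (h : Equiv.Perm X).symm x ∈ A then 1 else 0 := by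
            simp only [T, Finset.card_filter]
        _ = ∑ h : H, ∑ x : X, if (h : Equiv.Perm X).symm x ∈ A then 1 else 0 :=
            Finset.sum_comm
        _ = ∑ h : H, (Finset.univ.filter fun x => (h : Equiv.Perm X).symm x ∈ A).card := by
            simp only [Finset.card_filter]
        _ = ∑ _h : H, A.toFinset.card := by
            refine Finset.sum_congr rfl fun h _ => ?_
            refine Finset.card_bij' (fun x _ => (h : Equiv.Perm X).symm x)
              (fun a _ => (h : Equiv.Perm X) a) ?_ ?_ ?_ ?_
            · intro x hx; simp only [Finset.mem_filter] at hx; simpa using hx.2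
            · intro a ha; simp only [Set.mem_toFinset] at ha; simp [ha]
            · intro x _; simp
            · intro a _; simp
        _ = Fintype.card H * A.toFinset.card := by
            simp [Finset.sum_const, Finset.card_univ, mul_comm]
    -- second count : for every colour c, ∑_{χ x = c} (T x).card = |H|
    have hsum2 : ∀ c : C,
        ∑ x ∈ Finset.univ.filter (fun x => χ x = c), (T x).card = Fintype.card H := by
      intro c
      calc ∑ x ∈ Finset.univ.filter (fun x => χ x = c), (T x).card
          = ∑ x ∈ Finset.univ.filter (fun x => χ x = c),
              ∑ h : H, if (h : Equiv.Perm X).symm x ∈ A then 1 else 0 := by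
            simp only [T, Finset.card_filter]
        _ = ∑ h : H, ∑ x ∈ Finset.univ.filter (fun x => χ x = c),
              if (h : Equiv.Perm X).symm x ∈ A then 1 else 0 :=
            Finset.sum_comm
        _ = ∑ h : H, ((Finset.univ.filter (fun x => χ x = c)).filter
              (fun x => (h : Equiv.Perm X).symm x ∈ A)).card := by
            simp only [Finset.card_filter]
        _ = ∑ _h : H, 1 := by
            refine Finset.sum_congr rfl fun h _ => ?_
            obtain ⟨x0, hx0A, hx0c⟩ := (hk' h).surjOn (Set.mem_univ c)
            rw [Finset.card_eq_one]
            refine ⟨x0, ?_⟩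
            ext x
            simp only [Finset.mem_filter, Finset.mem_univ, true_and, Finset.mem_singleton]
            constructor
            · rintro ⟨hxc, hxA⟩
              exact (hk' h).injOn ((himg h x).2 hxA) hx0A (by rw [hxc, hx0c])
            · intro hx
              rw [hx]
              exact ⟨hx0c, (himg h x0).1 hx0A⟩
        _ = Fintype.card H := by simp
    -- positivity of t
    obtain ⟨x0⟩ := hX
    set t := (T x0).card with ht
    have htpos : 0 < t := by
      obtain ⟨a, haA, -⟩ := (hk 1).surjOn (Set.mem_univ (χ x0))
      rw [one_smul] at haA
      obtain ⟨h, hh⟩ := htrans' a x0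
      have : h ∈ T x0 := by
        rw [hmemT, ← hh, Equiv.symm_apply_apply]
        exact haA
      exact Finset.card_pos.2 ⟨h, this⟩
    have hTt : ∀ x : X, (T x).card = t := fun x => hconst x x0
    -- rewrite sums using constancy
    have h1 : Fintype.card X * t = Fintype.card H * A.toFinset.card := by
      rw [← hsum1]
      simp [hTt, Finset.sum_const, Finset.card_univ]
    have h2 : ∀ c : C, (Finset.univ.filter (fun x => χ x = c)).card * t = Fintype.card H := by
      intro c
      rw [← hsum2 c]
      simp [hTt, Finset.sum_const]
    -- key identity
    have hkey : ∀ c : C,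
        (Finset.univ.filter (fun x => χ x = c)).card * A.toFinset.card = Fintype.card X := by
      intro c
      have : ((Finset.univ.filter (fun x => χ x = c)).card * A.toFinset.card) * t
          = Fintype.card X * t := by
        calc ((Finset.univ.filter (fun x => χ x = c)).card * A.toFinset.card) * t
            = ((Finset.univ.filter (fun x => χ x = c)).card * t) * A.toFinset.card := by ring
          _ = Fintype.card H * A.toFinset.card := by rw [h2 c]
          _ = Fintype.card X * t := h1.symm
      exact Nat.eq_of_mul_eq_mul_right htpos this
    -- translate to Nat.card statements
    have hfib : ∀ c : C, Nat.card ↥(χ ⁻¹' {c}) = (Finset.univ.filter (fun x => χ x = c)).card := by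
      intro c
      rw [Nat.card_coe_set_eq, Set.ncard_eq_toFinset_card']
      congr 1
      ext x
      simp
    have hA : Nat.card ↥A = A.toFinset.card := by
      rw [Nat.card_coe_set_eq, Set.ncard_eq_toFinset_card']
    have hXcard : Nat.card X = Fintype.card X := Nat.card_eq_fintype_card
    have hmain : ∀ c : C, Nat.card X = Nat.card ↥A * Nat.card ↥(χ ⁻¹' {c}) := by
      intro c
      rw [hXcard, hA, hfib, ← hkey c, mul_comm]
    refine ⟨?_, hmain, ?_⟩
    · intro c c'
      have hApos : 0 < Nat.card ↥A := by
        rw [hA]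
        obtain ⟨a, haA, -⟩ := (hk 1).surjOn (Set.mem_univ (χ x0))
        rw [one_smul] at haA
        exact Finset.card_pos.2 ⟨a, Set.mem_toFinset.2 haA⟩
      have := (hmain c).symm.trans (hmain c')
      exact Nat.eq_of_mul_eq_mul_left hApos this
    · exact ⟨Nat.card ↥(χ ⁻¹' {χ x0}), hmain (χ x0)⟩
end

section
/- Let κ be an infinite cardinal. A hypergraph (X, 𝔉) is kaleidoscopical provided that: (1) |𝔉| ≤ κ and |F| = κ for each F ∈ 𝔉; (2) for any subfamily 𝔄 ⊆ 𝔉 of cardinality |𝔄| < κ and any subset B ⊆ X \ (⋃𝔄) of cardinality |B| < κ, the intersection St(B, 𝔉) ∩ (⋃𝔄) has cardinality less than κ. -/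
/-!
Colour by a transfinite greedy construction of length `κ`. The tasks are "the edge `F` receives
the colour `c`" and "the point `y` receives a colour"; there are at most `κ` of them, so they can
be scheduled along `κ.ord.ToType`, and before each stage fewer than `κ` colour assignments have
been made. A point is served by a colour not used so far. An edge `F` still missing `c` is served
by a point of `F` that is uncoloured and lies outside the star of the `c`-coloured points; such a
point exists because `|F| = κ` while, by (2) for `𝔄 = {F}`, that star meets `F` in fewer than
`κ` points. Each new assignment is compatible with all earlier ones, so all of them together
form a kaleidoscopical colouring.
-/

open Cardinal

universe u

/-- The star `St(B, 𝔉) = ⋃ {St(b, 𝔉) : b ∈ B}` where `St(x, 𝔉) = ⋃ {F ∈ 𝔉 : x ∈ F}`;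
equivalently, the union of all hyperedges that meet `B`. -/
def SetStar {X : Type u} (𝔉 : Set (Set X)) (B : Set X) : Set X :=
  ⋃₀ {F | F ∈ 𝔉 ∧ (F ∩ B).Nonempty}

open Set Function

universe v

section Greedy

variable {ι : Type u} {α : Type v} (R : α → α → Prop)

open Classical in
noncomputable def greedyChoice (s S : Set α) : Option α :=
  if h : ∃ a ∈ s, ∀ b ∈ S, R a b then some h.choose else none

theorem greedyChoice_spec {s S : Set α} {a : α} (h : a ∈ greedyChoice R s S) :
    a ∈ s ∧ ∀ b ∈ S, R a b := by
  unfold greedyChoice at h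
  split_ifs at h with hex
  · exact Option.some_injective _ h ▸ hex.choose_spec
  · cases h

theorem exists_mem_greedyChoice {s S : Set α} (h : ∃ a ∈ s, ∀ b ∈ S, R a b) :
    ∃ a, a ∈ greedyChoice R s S :=
  ⟨h.choose, by simp [greedyChoice, h]⟩

variable [LinearOrder ι] [WellFoundedLT ι] (cand : ι → Set α)

/-- Stage `i` picks an element of `cand i` that is `R`-related to everything picked before, if any. -/
noncomputable def greedy : ι → Option α :=
  wellFounded_lt.fix fun i prev => greedyChoice R (cand i) {b | ∃ j, ∃ hj : j < i, b ∈ prev j hj}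

def greedyBefore (i : ι) : Set α := {b | ∃ j, ∃ _ : j < i, b ∈ greedy R cand j}

def greedyRange : Set α := {b | ∃ i, b ∈ greedy R cand i}

theorem greedy_eq (i : ι) : greedy R cand i = greedyChoice R (cand i) (greedyBefore R cand i) :=
  wellFounded_lt.fix_eq _ i

variable {R cand}

theorem pairwise_greedyRange [Std.Symm R] : (greedyRange R cand).Pairwise R := by
  rintro a ⟨i, hi⟩ b ⟨j, hj⟩ hab
  rcases lt_trichotomy i j with hij | rfl | hij
  · rw [greedy_eq] at hj
    exact symm_of R ((greedyChoice_spec R hj).2 a ⟨i, hij, hi⟩)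
  · exact absurd (Option.mem_unique hi hj) hab
  · rw [greedy_eq] at hi
    exact (greedyChoice_spec R hi).2 b ⟨j, hij, hj⟩

theorem greedyRange_inter_cand_nonempty {i : ι}
    (h : (cand i ∩ greedyBefore R cand i).Nonempty ∨
      ∃ a ∈ cand i, ∀ b ∈ greedyBefore R cand i, R a b) :
    (cand i ∩ greedyRange R cand).Nonempty := by
  rcases h with ⟨a, ha, j, -, hj⟩ | hex
  · exact ⟨a, ha, j, hj⟩
  · obtain ⟨a, ha⟩ := exists_mem_greedyChoice R hex
    exact ⟨a, (greedyChoice_spec R ha).1, i, by rwa [greedy_eq]⟩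

theorem lift_mk_greedyBefore_le (i : ι) :
    lift.{u} #(greedyBefore R cand i) ≤ lift.{v} #(Iio i) := by
  choose j hj ha using fun a : greedyBefore R cand i => a.2
  refine lift_mk_le_lift_mk_of_injective (f := fun a => (⟨j a, hj a⟩ : Iio i)) fun a b hab => ?_
  have hjab : j a = j b := congrArg Subtype.val hab
  exact Subtype.ext (Option.mem_unique (ha a) (hjab ▸ ha b))

end Greedy

section Coloring

variable {X C : Type u} (𝔉 : Set (Set X))

/-- Partial colourings are sets of assignments `(x, c)`; two assignments are compatible if they
can both belong to a kaleidoscopical colouring. -/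
def ColorCompat (p q : X × C) : Prop :=
  p.1 ≠ q.1 ∧ (p.2 = q.2 → ∀ G ∈ 𝔉, p.1 ∈ G → q.1 ∉ G)

instance : Std.Symm (ColorCompat (C := C) 𝔉) where
  symm _ _ h := ⟨Ne.symm h.1, fun hc G hG hq hp => h.2 hc.symm G hG hp hq⟩

variable {𝔉}

theorem exists_bijOn_of_pairwise_colorCompat [Nonempty C] {D : Set (X × C)}
    (hD : D.Pairwise (ColorCompat 𝔉)) (hedge : ∀ F ∈ 𝔉, ∀ c, ∃ x ∈ F, (x, c) ∈ D)
    (hpt : ∀ x ∈ ⋃₀ 𝔉, ∃ c, (x, c) ∈ D) : ∃ χ : X → C, ∀ F ∈ 𝔉, BijOn χ F univ := by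
  classical
  let χ : X → C := fun x => if h : ∃ c, (x, c) ∈ D then h.choose else Classical.arbitrary C
  have hχ : ∀ {x c}, (x, c) ∈ D → χ x = c := fun {x c} hxc => by
    have h : ∃ c, (x, c) ∈ D := ⟨c, hxc⟩
    simp only [χ, dif_pos h]
    by_contra hne
    exact (hD h.choose_spec hxc (by simpa using hne)).1 rfl
  refine ⟨χ, fun F hF => ⟨fun _ _ => trivial, fun x hx y hy hxy => ?_, fun c _ => ?_⟩⟩
  · obtain ⟨c, hc⟩ := hpt x ⟨F, hF, hx⟩
    obtain ⟨d, hd⟩ := hpt y ⟨F, hF, hy⟩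
    have hcd : c = d := by rw [← hχ hc, ← hχ hd, hxy]
    by_contra hne
    exact (hD hc hd (by simp [hne])).2 hcd F hF hx hy
  · obtain ⟨x, hxF, hx⟩ := hedge F hF c
    exact ⟨x, hxF, hχ hx⟩

theorem exists_mem_notMem_of_mk_lt {κ : Cardinal.{u}} (hκ : ℵ₀ ≤ κ) {F A B : Set X}
    (hF : #F = κ) (hA : #A < κ) (hB : #↥(B ∩ F) < κ) : ∃ x ∈ F, x ∉ A ∧ x ∉ B := by
  by_contra! h
  have hsub : F ⊆ A ∪ (B ∩ F) := fun x hx => by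
    by_cases hxA : x ∈ A
    · exact Or.inl hxA
    · exact Or.inr ⟨h x hx hxA, hx⟩
  have := (mk_le_mk_of_subset hsub).trans (mk_union_le _ _)
  exact (add_lt_of_lt hκ hA hB).not_ge (hF ▸ this)

theorem mk_setStar_inter_lt {κ : Cardinal.{u}} (hκ : ℵ₀ ≤ κ)
    (h2 : ∀ 𝔄 ⊆ 𝔉, #𝔄 < κ → ∀ B : Set X, B ⊆ (⋃₀ 𝔄)ᶜ → #B < κ →
        #↥(SetStar 𝔉 B ∩ ⋃₀ 𝔄) < κ)
    {F B : Set X} (hF : F ∈ 𝔉) (hBF : Disjoint B F) (hB : #B < κ) :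
    #↥(SetStar 𝔉 B ∩ F) < κ := by
  simpa using h2 {F} (singleton_subset_iff.2 hF) (by simpa using one_lt_aleph0.trans_le hκ) B
    (by simpa [subset_compl_iff_disjoint_right] using hBF) hB

theorem inter_nonempty_or_exists_colorCompat_of_edge {κ : Cardinal.{u}} (hκ : ℵ₀ ≤ κ)
    (h2 : ∀ 𝔄 ⊆ 𝔉, #𝔄 < κ → ∀ B : Set X, B ⊆ (⋃₀ 𝔄)ᶜ → #B < κ →
        #↥(SetStar 𝔉 B ∩ ⋃₀ 𝔄) < κ)
    {F : Set X} (hF : F ∈ 𝔉) (hFκ : #F = κ) (c : C) {S : Set (X × C)} (hS : #S < κ) :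
    (F ×ˢ {c} ∩ S).Nonempty ∨ ∃ p ∈ F ×ˢ {c}, ∀ q ∈ S, ColorCompat 𝔉 p q := by
  refine or_iff_not_imp_left.2 fun hFc => ?_
  have hBF : Disjoint {y | (y, c) ∈ S} F :=
    disjoint_left.2 fun y hyS hyF => hFc ⟨(y, c), ⟨hyF, rfl⟩, hyS⟩
  have hB : #{y | (y, c) ∈ S} < κ :=
    (mk_preimage_of_injective (·, c) S fun _ _ h => congrArg Prod.fst h).trans_lt hS
  obtain ⟨x, hxF, hxS, hxStar⟩ := exists_mem_notMem_of_mk_lt hκ hFκ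
    (mk_image_le.trans_lt hS) (mk_setStar_inter_lt hκ h2 hF hBF hB)
  refine ⟨(x, c), ⟨hxF, rfl⟩, fun ⟨y, d⟩ hyd => ⟨fun hxy => hxS ⟨_, hyd, hxy.symm⟩, ?_⟩⟩
  rintro rfl G hG hxG hyG
  exact hxStar ⟨G, ⟨hG, y, hyG, hyd⟩, hxG⟩

theorem inter_nonempty_or_exists_colorCompat_of_point (y : X) {S : Set (X × C)}
    (hS : #S < #C) :
    (({y} : Set X) ×ˢ (univ : Set C) ∩ S).Nonempty ∨
      ∃ p ∈ ({y} : Set X) ×ˢ (univ : Set C), ∀ q ∈ S, ColorCompat 𝔉 p q := by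
  refine or_iff_not_imp_left.2 fun hy => ?_
  obtain ⟨c, hc⟩ : ∃ c, c ∉ Prod.snd '' S := by
    by_contra! h
    have : #C ≤ #(Prod.snd '' S) := by
      rw [← mk_univ]
      exact mk_le_mk_of_subset fun c _ => h c
    exact (mk_image_le.trans_lt hS).not_ge this
  refine ⟨(y, c), ⟨rfl, trivial⟩, fun q hq => ⟨fun hyq => hy ⟨q, ⟨hyq.symm, trivial⟩, hq⟩,
    fun hcq => (hc ⟨q, hq, hcq.symm⟩).elim⟩⟩

theorem mk_sUnion_le_of_le {κ : Cardinal.{u}} (hκ : ℵ₀ ≤ κ) (h1 : #𝔉 ≤ κ)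
    (h1' : ∀ F ∈ 𝔉, #F ≤ κ) : #(⋃₀ 𝔉) ≤ κ :=
  (mk_sUnion_le 𝔉).trans (mul_le_of_le hκ h1 (ciSup_le' fun F => h1' F F.2))

theorem exists_pairwise_colorCompat [Nonempty C] {κ : Cardinal.{u}} (hκ : ℵ₀ ≤ κ) (hC : #C = κ)
    (h1 : #𝔉 ≤ κ) (h1' : ∀ F ∈ 𝔉, #F = κ)
    (h2 : ∀ 𝔄 ⊆ 𝔉, #𝔄 < κ → ∀ B : Set X, B ⊆ (⋃₀ 𝔄)ᶜ → #B < κ →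
        #↥(SetStar 𝔉 B ∩ ⋃₀ 𝔄) < κ)
    (hne : 𝔉.Nonempty) :
    ∃ D : Set (X × C), D.Pairwise (ColorCompat 𝔉) ∧ (∀ F ∈ 𝔉, ∀ c, ∃ x ∈ F, (x, c) ∈ D) ∧
      ∀ x ∈ ⋃₀ 𝔉, ∃ c, (x, c) ∈ D := by
  let task : (𝔉 × C) ⊕ ⋃₀ 𝔉 → Set (X × C) :=
    Sum.elim (fun t => (t.1 : Set X) ×ˢ {t.2}) fun y => {(y : X)} ×ˢ Set.univ
  have hT : #((𝔉 × C) ⊕ ⋃₀ 𝔉) ≤ #κ.ord.ToType := by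
    simpa [hC] using add_le_of_le hκ (mul_le_of_le hκ h1 le_rfl)
      (mk_sUnion_le_of_le hκ h1 fun F hF => (h1' F hF).le)
  obtain ⟨e, he⟩ := exists_surjective_iff.2
    ⟨⟨fun _ => .inl (⟨hne.some, hne.some_mem⟩, Classical.arbitrary C)⟩, (le_def _ _).1 hT⟩
  let D := greedyRange (ColorCompat 𝔉) (task ∘ e)
  have hbefore (i) : #(greedyBefore (ColorCompat 𝔉) (task ∘ e) i) < κ := by
    have := lift_mk_greedyBefore_le (R := ColorCompat 𝔉) (cand := task ∘ e) i
    rw [lift_id, lift_id] at this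
    exact this.trans_lt (by simpa using mk_Iio_lt i)
  have hcover (t) : (task t ∩ D).Nonempty := by
    obtain ⟨i, rfl⟩ := he t
    show ((task ∘ e) i ∩ D).Nonempty
    refine greedyRange_inter_cand_nonempty ?_
    rcases hi : e i with ⟨⟨F, hF⟩, c⟩ | ⟨y, hy⟩ <;>
      simp only [comp_apply, hi, task, Sum.elim_inl, Sum.elim_inr]
    · exact inter_nonempty_or_exists_colorCompat_of_edge hκ h2 hF (h1' F hF) c (hbefore i)
    · exact inter_nonempty_or_exists_colorCompat_of_point y ((hbefore i).trans_eq hC.symm)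
  refine ⟨D, pairwise_greedyRange, fun F hF c => ?_, fun y hy => ?_⟩
  · obtain ⟨⟨x, _⟩, ⟨hx, rfl⟩, hxD⟩ := hcover (.inl (⟨F, hF⟩, c))
    exact ⟨x, hx, hxD⟩
  · obtain ⟨⟨x, c⟩, ⟨hxy, -⟩, hcD⟩ := hcover (.inr ⟨y, hy⟩)
    obtain rfl : x = y := hxy
    exact ⟨c, hcD⟩

end Coloring

/-- Let `κ` be an infinite cardinal. A hypergraph `(X, 𝔉)` is
kaleidoscopical provided (1) `|𝔉| ≤ κ` and `|F| = κ` for every `F ∈ 𝔉`, and (2) for any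
subfamily `𝔄 ⊆ 𝔉` with `|𝔄| < κ` and any `B ⊆ X \ ⋃𝔄` with `|B| < κ`, the intersection
`St(B,𝔉) ∩ ⋃𝔄` has cardinality `< κ`. -/
theorem stmt8 {X : Type u} (κ : Cardinal.{u}) (hκ : ℵ₀ ≤ κ)
    (𝔉 : Set (Set X))
    (h1 : #𝔉 ≤ κ) (h1' : ∀ F ∈ 𝔉, #F = κ)
    (h2 : ∀ 𝔄 ⊆ 𝔉, #𝔄 < κ → ∀ B : Set X, B ⊆ (⋃₀ 𝔄)ᶜ → #B < κ →
        #↥(SetStar 𝔉 B ∩ ⋃₀ 𝔄) < κ) :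
    ∃ (C : Type u) (χ : X → C), Function.Surjective χ ∧
      ∀ F ∈ 𝔉, Set.BijOn χ F Set.univ := by
  rcases 𝔉.eq_empty_or_nonempty with rfl | ⟨F₀, hF₀⟩
  · exact ⟨X, id, surjective_id, by simp⟩
  have : Nonempty κ.out := mk_ne_zero_iff.1 (by simpa using (aleph0_pos.trans_le hκ).ne')
  obtain ⟨D, hD, hedge, hpt⟩ := exists_pairwise_colorCompat hκ (mk_out κ) h1 h1' h2 ⟨F₀, hF₀⟩
  obtain ⟨χ, hχ⟩ := exists_bijOn_of_pairwise_colorCompat hD hedge hpt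
  refine ⟨κ.out, χ, fun c => ?_, hχ⟩
  obtain ⟨x, -, hx⟩ := (hχ F₀ hF₀).surjOn (mem_univ c)
  exact ⟨x, hx⟩
end

section
/- Let κ be a non-zero cardinal, π : X → Y a κ-to-1 equivariant map between two transitive G-spaces, K ⊆ Y a kaleidoscopical configuration, and χ : Y → C a K-kaleidoscopical coloring. Then the preimage K̄ = π⁻¹(K) is a kaleidoscopical configuration in X: for any coloring χ̄ : X → C × I (where I is a set of cardinality κ) such that for each y ∈ Y the restriction of χ̄ to π⁻¹(y) is a bijection onto {χ(y)} × I, the restriction of χ̄ to gK̄ is a bijection onto C × I for every g ∈ G. -/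
open Pointwise

universe u v

/-- Let `κ ≠ 0` be a cardinal, `π : X → Y` a `κ`-to-1 equivariant map
between transitive `G`-spaces, `K ⊆ Y` a kaleidoscopical configuration with
`K`-kaleidoscopical coloring `χ : Y → C`, and `I` a set of cardinality `κ`. Then for any
coloring `χ' : X → C × I` mapping each fiber `π⁻¹(y)` bijectively onto `{χ(y)} × I`, the
restriction of `χ'` to each translate `g • π⁻¹(K)` is a bijection onto `C × I`. -/
theorem stmt9 {G : Type v} {X Y : Type u} [Group G] [MulAction G X] [MulAction G Y]
    (hX : ∀ x y : X, ∃ g : G, g • x = y) (hY : ∀ x y : Y, ∃ g : G, g • x = y)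
    (κ : Cardinal.{u}) (hκ : κ ≠ 0)
    (π : X → Y) (heq : ∀ (g : G) (x : X), π (g • x) = g • π x)
    (hfib : ∀ y : Y, Cardinal.mk ↥(π ⁻¹' {y}) = κ)
    (K : Set Y) {C : Type u} (χ : Y → C) (hsurj : Function.Surjective χ)
    (hk : ∀ g : G, Set.BijOn χ (g • K) Set.univ)
    {I : Type u} (hI : Cardinal.mk I = κ)
    (χ' : X → C × I)
    (hχ' : ∀ y : Y, Set.BijOn χ' (π ⁻¹' {y}) ({χ y} ×ˢ (Set.univ : Set I))) :
    ∀ g : G, Set.BijOn χ' (g • (π ⁻¹' K)) Set.univ := by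
  intro g
  have hset : g • (π ⁻¹' K) = π ⁻¹' (g • K) := by
    ext x
    simp only [Set.mem_smul_set_iff_inv_smul_mem, Set.mem_preimage, heq]
  rw [hset]
  -- key fact: χ (π x) = (χ' x).1 for all x
  have hfst : ∀ x : X, (χ' x).1 = χ (π x) := by
    intro x
    have := (hχ' (π x)).mapsTo (show x ∈ π ⁻¹' {π x} by simp)
    exact this.1
  refine ⟨fun x _ => trivial, ?_, ?_⟩
  · intro x₁ hx₁ x₂ hx₂ hχeq
    have h1 : χ (π x₁) = χ (π x₂) := by rw [← hfst, ← hfst, hχeq]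
    have hπ : π x₁ = π x₂ := (hk g).injOn hx₁ hx₂ h1
    exact (hχ' (π x₁)).injOn (by simp) (by simp [hπ]) hχeq
  · rintro ⟨c, i⟩ -
    obtain ⟨y, hy, hyc⟩ := (hk g).surjOn (Set.mem_univ c)
    obtain ⟨x, hx, hxc⟩ := (hχ' y).surjOn
      (show (c, i) ∈ ({χ y} ×ˢ (Set.univ : Set I)) by simp [hyc])
    exact ⟨x, by simp only [Set.mem_preimage] at hx ⊢; rw [hx]; exact hy, hxc⟩
end

section
/- Let κ be a non-zero cardinal, π : X → Y a κ-to-1 equivariant map between two transitive G-spaces, s : Y → X a section of π (i.e. π ∘ s = id_Y), K ⊆ Y a kaleidoscopical configuration, and χ : Y → C a K-kaleidoscopical coloring. Then the image K̃ = s(K) is a kaleidoscopical configuration in X with respect to the coloring χ̃ = χ ∘ π : X → C; that is, the restriction of χ ∘ π to gK̃ is a bijection onto C for every g ∈ G. -/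
open Pointwise

universe u v

/-- Let `κ ≠ 0` be a cardinal, `π : X → Y` a `κ`-to-1 equivariant map
between transitive `G`-spaces, `s : Y → X` a section of `π`, `K ⊆ Y` a kaleidoscopical
configuration and `χ : Y → C` a `K`-kaleidoscopical coloring. Then the image `s(K)` is a
kaleidoscopical configuration in `X` with respect to the coloring `χ ∘ π`: the
restriction of `χ ∘ π` to each translate `g • s(K)` is a bijection onto `C`. -/
theorem stmt10 {G : Type v} {X Y : Type u} [Group G] [MulAction G X] [MulAction G Y]
    (hX : ∀ x y : X, ∃ g : G, g • x = y) (hY : ∀ x y : Y, ∃ g : G, g • x = y)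
    (κ : Cardinal.{u}) (hκ : κ ≠ 0)
    (π : X → Y) (heq : ∀ (g : G) (x : X), π (g • x) = g • π x)
    (hfib : ∀ y : Y, Cardinal.mk ↥(π ⁻¹' {y}) = κ)
    (s : Y → X) (hs : ∀ y : Y, π (s y) = y)
    (K : Set Y) {C : Type u} (χ : Y → C) (hsurj : Function.Surjective χ)
    (hk : ∀ g : G, Set.BijOn χ (g • K) Set.univ) :
    ∀ g : G, Set.BijOn (χ ∘ π) (g • (s '' K)) Set.univ := by
  intro g
  have hmem : ∀ a ∈ g • (s '' K), π a ∈ g • K := by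
    rintro a ⟨x, ⟨k, hk', rfl⟩, rfl⟩
    exact ⟨k, hk', by rw [heq, hs]⟩
  refine ⟨fun a _ => Set.mem_univ _, ?_, ?_⟩
  · rintro a ha b hb hab
    rcases ha with ⟨x, ⟨k1, hk1, rfl⟩, rfl⟩
    rcases hb with ⟨x', ⟨k2, hk2, rfl⟩, rfl⟩
    have h1 : g • k1 = g • k2 := by
      apply (hk g).injOn ⟨k1, hk1, rfl⟩ ⟨k2, hk2, rfl⟩
      simpa [Function.comp, heq, hs] using hab
    have : k1 = k2 := smul_left_cancel g h1
    rw [this]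
  · rintro c -
    obtain ⟨y, hy, hyc⟩ := (hk g).surjOn (Set.mem_univ c)
    rcases hy with ⟨k, hkK, rfl⟩
    exact ⟨g • s k, ⟨s k, ⟨k, hkK, rfl⟩, rfl⟩, by simpa [Function.comp, heq, hs] using hyc⟩
end

section
/- Let Δ_X = E_0 ⊆ E_1 ⊆ … ⊆ E_m be an increasing sequence of G-invariant equivalence relations on a transitive G-space X, and K ⊆ X a subset such that: (1) the projection K/E_m is a kaleidoscopical configuration in the quotient G-space X/E_m; (2) for every i < m the set K is E_{i+1}/E_i-parallel or E_{i+1}/E_i-orthogonal. Then K is a kaleidoscopical configuration in X. -/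
/-!
Descend the chain one step at a time, viewing `X/E_i → X/E_{i+1}` as a `G`-equivariant
surjection `r`. If `K` is orthogonal, `r` is injective on `K/E_i` and the colouring pulls back
along `r`. If `K` is parallel, `K/E_i` is a union of `r`-fibres; colour a point by the old colour of
its image together with its position in its fibre, all fibres being identified with one fixed
fibre through the transitive action. At `E_0 = Δ_X` the quotient map is injective.
-/

open Pointwise Set

universe u v

def IsKaleidoscopic (G : Type v) {Y : Type u} [SMul G Y] (L : Set Y) : Prop :=
  ∃ (C : Type u) (χ : Y → C), Function.Surjective χ ∧ ∀ g : G, BijOn χ (g • L) univ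

variable {G : Type v} [Group G]

section Equivariant

variable {Y Z : Type u} [MulAction G Y] [MulAction G Z] {L : Set Y}

theorem IsKaleidoscopic.of_bijOn {C : Type u} {χ : Y → C}
    (h : ∀ g : G, BijOn χ (g • L) univ) : IsKaleidoscopic G L :=
  ⟨C, χ, fun c => let ⟨y, _, hy⟩ := (h 1).surjOn (mem_univ c); ⟨y, hy⟩, h⟩

theorem isKaleidoscopic_image_iff (r : Y →[G] Z) :
    IsKaleidoscopic G (r '' L) ↔ ∃ (C : Type u) (χ : Z → C), Function.Surjective χ ∧
      ∀ g : G, BijOn χ (r '' (g • L)) univ := by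
  simp only [IsKaleidoscopic, image_smul_set]

theorem MulActionHom.injOn_smul_set (r : Y →[G] Z) (hr : InjOn r L) (g : G) :
    InjOn r (g • L) := by
  intro a ha b hb hab
  rw [mem_smul_set_iff_inv_smul_mem] at ha hb
  exact MulAction.injective g⁻¹ (hr ha hb (by simp only [map_smul, hab]))

theorem MulActionHom.preimage_image_smul_set_subset (r : Y →[G] Z) (hL : r ⁻¹' (r '' L) ⊆ L)
    (g : G) : r ⁻¹' (r '' (g • L)) ⊆ g • L := by
  rw [image_smul_set, Group.preimage_smul_set]
  exact smul_set_mono hL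

theorem IsKaleidoscopic.of_image_of_injOn (r : Y →[G] Z) (hr : InjOn r L)
    (h : IsKaleidoscopic G (r '' L)) : IsKaleidoscopic G L := by
  obtain ⟨C, χ, -, hχ⟩ := (isKaleidoscopic_image_iff r).1 h
  exact of_bijOn (χ := χ ∘ r) fun g => (hχ g).comp (r.injOn_smul_set hr g).bijOn_image

theorem IsKaleidoscopic.of_image_of_preimage_image_subset [MulAction.IsPretransitive G Y]
    (r : Y →[G] Z) (hr : Function.Surjective r) (hL : r ⁻¹' (r '' L) ⊆ L)
    (h : IsKaleidoscopic G (r '' L)) : IsKaleidoscopic G L := by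
  obtain ⟨C, χ, -, hχ⟩ := (isKaleidoscopic_image_iff r).1 h
  rcases isEmpty_or_nonempty Y with hY | ⟨⟨y₀⟩⟩
  · exact of_bijOn (χ := id) fun g => by simp [eq_empty_of_isEmpty]
  have hγ : ∀ z, ∃ γ : G, γ • r y₀ = z := fun z => by
    obtain ⟨y, rfl⟩ := hr z
    obtain ⟨γ, rfl⟩ := MulAction.exists_smul_eq G y₀ y
    exact ⟨γ, (map_smul r γ y₀).symm⟩
  choose γ hγ using hγ
  let F := r ⁻¹' {r y₀}
  have hF : ∀ y, (γ (r y))⁻¹ • y ∈ F := fun y => by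
    simp only [F, mem_preimage, mem_singleton_iff, map_smul, inv_smul_eq_iff, hγ]
  refine of_bijOn (χ := fun y => (χ (r y), (⟨_, hF y⟩ : F))) fun g =>
    ⟨mapsTo_univ _ _, fun a ha b hb hab => ?_, fun ⟨c, y, hy⟩ _ => ?_⟩
  · simp only [Prod.mk.injEq, Subtype.mk.injEq] at hab
    have hrab : r a = r b := (hχ g).injOn (mem_image_of_mem r ha) (mem_image_of_mem r hb) hab.1
    rw [hrab] at hab
    exact MulAction.injective _ hab.2
  · obtain ⟨z, hz, rfl⟩ := (hχ g).surjOn (mem_univ c)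
    have hrz : r (γ z • y) = z := by
      rw [map_smul, show r y = r y₀ from hy, hγ]
    refine ⟨γ z • y, r.preimage_image_smul_set_subset hL g (by rwa [mem_preimage, hrz]), ?_⟩
    exact Prod.ext (by simp only [hrz]) (Subtype.ext (by simp only [hrz, inv_smul_smul]))

end Equivariant

namespace Setoid

variable {X : Type u}

/-- `E.IsParallel F K` and `E.IsOrthogonal F K` are the paper's `F/E`-parallel and
`F/E`-orthogonal. -/
def IsParallel (E F : Setoid X) (K : Set X) : Prop :=
  ∀ x ∈ K, {y | ∃ k ∈ K, E.r k y} ∩ {y | F.r x y} = {y | F.r x y}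

def IsOrthogonal (E F : Setoid X) (K : Set X) : Prop :=
  ∀ x ∈ K, {y | ∃ k ∈ K, E.r k y} ∩ {y | F.r x y} = {y | E.r x y}

variable {E F : Setoid X} {K : Set X}

theorem IsParallel.preimage_image_subset (hEF : E ≤ F) (h : E.IsParallel F K) :
    map_of_le hEF ⁻¹' (map_of_le hEF '' (Quotient.mk E '' K)) ⊆ Quotient.mk E '' K := by
  rintro q ⟨_, ⟨k, hk, rfl⟩, hkq⟩
  induction q using Quotient.ind with | _ y
  have hky : y ∈ {y | ∃ k ∈ K, E.r k y} ∩ {y | F.r k y} := by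
    rw [h k hk]
    exact Quotient.exact hkq
  obtain ⟨k', hk', hk'y⟩ := hky.1
  exact ⟨k', hk', Quotient.sound hk'y⟩

theorem IsOrthogonal.injOn (hEF : E ≤ F) (h : E.IsOrthogonal F K) :
    InjOn (map_of_le hEF) (Quotient.mk E '' K) := by
  rintro _ ⟨a, ha, rfl⟩ _ ⟨b, hb, rfl⟩ hab
  have hb' : b ∈ {y | ∃ k ∈ K, E.r k y} ∩ {y | F.r a y} :=
    ⟨⟨b, hb, E.refl b⟩, Quotient.exact hab⟩
  rw [h a ha] at hb'
  exact Quotient.sound hb'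

end Setoid

namespace SMulCon

variable {X : Type u} [MulAction G X]

def mkHom (c : SMulCon G X) : X →[G] c.Quotient where
  toFun := Quotient.mk c.toSetoid
  map_smul' _ _ := rfl

def factor {c d : SMulCon G X} (h : c.toSetoid ≤ d.toSetoid) : c.Quotient →[G] d.Quotient where
  toFun := Setoid.map_of_le h
  map_smul' _ := Quotient.ind fun _ => rfl

theorem isKaleidoscopic_image_mkHom_of_le [MulAction.IsPretransitive G X] {c d : SMulCon G X}
    (hcd : c.toSetoid ≤ d.toSetoid) {K : Set X}
    (hK : c.toSetoid.IsParallel d.toSetoid K ∨ c.toSetoid.IsOrthogonal d.toSetoid K)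
    (h : IsKaleidoscopic G (d.mkHom '' K)) : IsKaleidoscopic G (c.mkHom '' K) := by
  have hd : d.mkHom '' K = factor hcd '' (c.mkHom '' K) := by rw [image_image]; rfl
  have : MulAction.IsPretransitive G c.Quotient :=
    .of_surjective_map (f := c.mkHom) Quotient.mk_surjective inferInstance
  rw [hd] at h
  rcases hK with hpar | horth
  · exact h.of_image_of_preimage_image_subset (factor hcd)
      (Quotient.ind fun x => ⟨⟦x⟧, rfl⟩) (hpar.preimage_image_subset hcd)
  · exact h.of_image_of_injOn (factor hcd) (horth.injOn hcd)

end SMulCon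

/-- Let `Δ_X = E_0 ⊆ E_1 ⊆ … ⊆ E_m` be an increasing sequence of
`G`-invariant equivalence relations on a transitive `G`-space `X` and `K ⊆ X` such that
(1) the projection `K/E_m` is kaleidoscopical in the quotient `G`-space `X/E_m`, and
(2) for every `i < m` the set `K` is `E_{i+1}/E_i`-parallel
(`[K]_{E_i} ∩ [x]_{E_{i+1}} = [x]_{E_{i+1}}` for all `x ∈ K`) or `E_{i+1}/E_i`-orthogonal
(`[K]_{E_i} ∩ [x]_{E_{i+1}} = [x]_{E_i}` for all `x ∈ K`). Then `K` is a kaleidoscopical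
configuration in `X`. -/
theorem stmt11 {G : Type v} {X : Type u} [Group G] [MulAction G X]
    (htrans : ∀ x y : X, ∃ g : G, g • x = y)
    (m : ℕ) (E : Fin (m + 1) → Setoid X)
    (hmono : Monotone E) (h0 : E 0 = ⊥)
    (hinv : ∀ (i : Fin (m + 1)) (g : G) (x y : X), (E i).r x y → (E i).r (g • x) (g • y))
    (K : Set X)
    (hquot : ∃ (C : Type u) (χ : Quotient (E (Fin.last m)) → C), Function.Surjective χ ∧
        ∀ g : G, Set.BijOn χ (Quotient.mk (E (Fin.last m)) '' (g • K)) Set.univ)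
    (hsplit : ∀ i : Fin m,
        (∀ x ∈ K, {y | ∃ k ∈ K, (E i.castSucc).r k y} ∩ {y | (E i.succ).r x y}
            = {y | (E i.succ).r x y}) ∨
        (∀ x ∈ K, {y | ∃ k ∈ K, (E i.castSucc).r k y} ∩ {y | (E i.succ).r x y}
            = {y | (E i.castSucc).r x y})) :
    ∃ (C : Type u) (χ : X → C), Function.Surjective χ ∧
      ∀ g : G, Set.BijOn χ (g • K) Set.univ := by
  have : MulAction.IsPretransitive G X := ⟨htrans⟩
  let c : Fin (m + 1) → SMulCon G X := fun i => ⟨E i, fun g _ _ => hinv i g _ _⟩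
  have hc : ∀ i, IsKaleidoscopic G ((c i).mkHom '' K) :=
    Fin.reverseInduction ((isKaleidoscopic_image_iff _).2 hquot) fun i hi =>
      SMulCon.isKaleidoscopic_image_mkHom_of_le (c := c i.castSucc) (d := c i.succ)
        (hmono i.castSucc_le_succ) (hsplit i) hi
  have hinj : Function.Injective (c 0).mkHom := fun x y hxy => by
    have hxy : (E 0).r x y := Quotient.exact hxy
    rwa [h0] at hxy
  exact (hc 0).of_image_of_injOn _ hinj.injOn
end

section
/- Let (X,d) be an isometrically homogeneous ultrametric space with finite distance scale d(X × X) = {ε_0, ε_1, …, ε_n} where 0 = ε_0 < ε_1 < … < ε_n, and for ε ≥ 0 let E_ε = {(x,y) ∈ X × X : d(x,y) ≤ ε}. Then every kaleidoscopical configuration K in X (with respect to the action of the isometry group Iso(X)) is (E_{ε_0}, E_{ε_1}, …, E_{ε_n})-splittable: for every i < n the set K is E_{ε_{i+1}}/E_{ε_i}-parallel or E_{ε_{i+1}}/E_{ε_i}-orthogonal. -/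
universe u

/-!
Fix a level `r = ε_i < R = ε_{i+1}`, so that no distance lies in `(r, R)`. In an ultrametric
space an isometry `u` can be localised: acting by `u` on `B(p, r)`, by `u⁻¹` on `B(u p, r)` and
trivially elsewhere is again an isometry as soon as `d(p, u p) ≤ R`. Together with homogeneity
this makes the isometry group transitive on pairs at distance `R`, and lets one move a point `x'`
to any `y ∈ B(x', R)` while fixing every point far from both.

If `K` is not orthogonal at this level, it contains two points at distance `R`. Suppose some
`y ∈ B(x', R)` with `x' ∈ K` were at distance `> r` from all of `K`, and let `k ∈ K` have the
colour of `y`. Depending on whether `d(k, x') ≤ r`, one of the isometries above carries two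
points of `K` to `k` and `y`, contradicting injectivity of the colouring on that translate of `K`.
So `K` is parallel.
-/

open Metric Set Function

section Ultrametric

variable {X : Type*} [PseudoMetricSpace X] [IsUltrametricDist X]

lemma mem_closedBall_iff_of_dist_le {z w q : X} {r : ℝ} (h : dist z w ≤ r) :
    z ∈ closedBall q r ↔ w ∈ closedBall q r := by
  simp only [mem_closedBall]
  constructor <;> intro hq
  · exact (dist_triangle_max w z q).trans (max_le (dist_comm w z ▸ h) hq)
  · exact (dist_triangle_max z w q).trans (max_le h hq)

lemma dist_le_dist_of_gap {f : X → X} {r R : ℝ}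
    (hgap : ∀ z w : X, r < dist z w → R ≤ dist z w)
    (hloc : ∀ z w, dist z w ≤ r → dist (f z) (f w) ≤ dist z w)
    (hmove : ∀ z, dist z (f z) ≤ R) (z w : X) : dist (f z) (f w) ≤ dist z w := by
  rcases le_or_gt (dist z w) r with h | h
  · exact hloc z w h
  · have hR := hgap z w h
    calc dist (f z) (f w) ≤ max (dist (f z) z) (max (dist z w) (dist w (f w))) :=
          (dist_triangle_max _ z _).trans (max_le_max le_rfl (dist_triangle_max z w _))
      _ ≤ dist z w :=
          max_le (dist_comm z (f z) ▸ (hmove z).trans hR) (max_le le_rfl ((hmove w).trans hR))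

end Ultrametric

lemma isometry_of_leftInverse {X : Type*} [PseudoMetricSpace X] {f g : X → X}
    (hgf : LeftInverse g f) (hf : ∀ z w, dist (f z) (f w) ≤ dist z w)
    (hg : ∀ z w, dist (g z) (g w) ≤ dist z w) : Isometry f :=
  Isometry.of_dist_eq fun z w =>
    le_antisymm (hf z w) (by simpa only [hgf z, hgf w] using hg (f z) (f w))

section BallSwap

variable {X : Type*} [PseudoMetricSpace X]

open Classical in
/-- In an ultrametric space `closedBall p r` and `closedBall (u p) r` are equal or disjoint; when
they are equal this is `u` on the ball and the identity elsewhere. -/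
noncomputable def ballSwap (u : X ≃ᵢ X) (p : X) (r : ℝ) : X → X :=
  (closedBall p r).piecewise u ((closedBall (u p) r).piecewise u.symm id)

variable (u : X ≃ᵢ X) (p : X) (r : ℝ)

lemma ballSwap_of_mem {z : X} (hz : z ∈ closedBall p r) : ballSwap u p r z = u z := by
  classical
  exact piecewise_eq_of_mem _ _ _ hz

lemma ballSwap_of_notMem_of_mem {z : X} (hz : z ∉ closedBall p r)
    (hz' : z ∈ closedBall (u p) r) : ballSwap u p r z = u.symm z := by
  classical
  rw [ballSwap, piecewise_eq_of_notMem _ _ _ hz, piecewise_eq_of_mem _ _ _ hz']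

lemma ballSwap_of_notMem {z : X} (hz : z ∉ closedBall p r) (hz' : z ∉ closedBall (u p) r) :
    ballSwap u p r z = z := by
  classical
  rw [ballSwap, piecewise_eq_of_notMem _ _ _ hz, piecewise_eq_of_notMem _ _ _ hz', id]

variable [IsUltrametricDist X]

lemma leftInverse_ballSwap : LeftInverse (ballSwap u.symm (u p) r) (ballSwap u p r) := by
  intro z
  have hsymm : u.symm (u p) = p := u.symm_apply_apply p
  by_cases hz : z ∈ closedBall p r
  · have huz : u z ∈ closedBall (u p) r := by rwa [mem_closedBall, u.dist_eq]
    rw [ballSwap_of_mem u p r hz, ballSwap_of_mem _ _ _ huz, u.symm_apply_apply]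
  by_cases hz' : z ∈ closedBall (u p) r
  · have huz : u.symm z ∈ closedBall p r := by
      rwa [mem_closedBall, ← u.dist_eq, u.apply_symm_apply]
    have hdisj : Disjoint (closedBall p r) (closedBall (u p) r) :=
      (IsUltrametricDist.closedBall_eq_or_disjoint p (u p) r).resolve_left
        fun h => hz (h ▸ hz')
    have huz' : u.symm z ∉ closedBall (u p) r := hdisj.notMem_of_mem_left huz
    rw [ballSwap_of_notMem_of_mem u p r hz hz', ballSwap_of_notMem_of_mem _ _ _ huz',
      IsometryEquiv.symm_symm, u.apply_symm_apply]
    rwa [hsymm]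
  · rw [ballSwap_of_notMem u p r hz hz', ballSwap_of_notMem _ _ _ hz' (by rwa [hsymm])]

lemma dist_ballSwap_of_dist_le {z w : X} (h : dist z w ≤ r) :
    dist (ballSwap u p r z) (ballSwap u p r w) = dist z w := by
  have hB := mem_closedBall_iff_of_dist_le (q := p) h
  have hB' := mem_closedBall_iff_of_dist_le (q := u p) h
  by_cases hz : z ∈ closedBall p r
  · rw [ballSwap_of_mem u p r hz, ballSwap_of_mem u p r (hB.mp hz), u.dist_eq]
  by_cases hz' : z ∈ closedBall (u p) r
  · rw [ballSwap_of_notMem_of_mem u p r hz hz',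
      ballSwap_of_notMem_of_mem u p r (hB.not.mp hz) (hB'.mp hz'), u.symm.dist_eq]
  · rw [ballSwap_of_notMem u p r hz hz',
      ballSwap_of_notMem u p r (hB.not.mp hz) (hB'.not.mp hz')]

lemma dist_ballSwap_le {r R : ℝ} (hrR : r ≤ R) (hp : dist p (u p) ≤ R) (z : X) :
    dist z (ballSwap u p r z) ≤ R := by
  have hmove : ∀ z ∈ closedBall p r, dist z (u z) ≤ R := fun z hz =>
    (dist_triangle_max z p (u z)).trans <| max_le (hz.trans hrR) <|
      (dist_triangle_max p (u p) (u z)).trans <|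
        max_le hp (by rw [u.dist_eq, dist_comm]; exact (mem_closedBall.mp hz).trans hrR)
  by_cases hz : z ∈ closedBall p r
  · rw [ballSwap_of_mem u p r hz]
    exact hmove z hz
  by_cases hz' : z ∈ closedBall (u p) r
  · rw [ballSwap_of_notMem_of_mem u p r hz hz', dist_comm]
    have huz : u.symm z ∈ closedBall p r := by
      rwa [mem_closedBall, ← u.dist_eq, u.apply_symm_apply]
    simpa only [u.apply_symm_apply] using hmove _ huz
  · rw [ballSwap_of_notMem u p r hz hz', dist_self]
    exact dist_nonneg.trans hp

end BallSwap

section Homogeneous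

variable {X : Type*} [PseudoMetricSpace X] [IsUltrametricDist X] {r R : ℝ}

lemma exists_isometryEquiv_eqOn_closedBall (hgap : ∀ z w : X, r < dist z w → R ≤ dist z w)
    (hrR : r ≤ R) (u : X ≃ᵢ X) (p : X) (hp : dist p (u p) ≤ R) :
    ∃ σ : X ≃ᵢ X,
      EqOn σ u (closedBall p r) ∧ EqOn σ id (closedBall p r ∪ closedBall (u p) r)ᶜ := by
  have hp' : dist (u p) (u.symm (u p)) ≤ R := by rwa [u.symm_apply_apply, dist_comm]
  have hnonexp : ∀ (v : X ≃ᵢ X) (q : X), dist q (v q) ≤ R →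
      ∀ z w, dist (ballSwap v q r z) (ballSwap v q r w) ≤ dist z w := fun v q hq =>
    dist_le_dist_of_gap hgap (fun z w h => (dist_ballSwap_of_dist_le v q r h).le)
      (dist_ballSwap_le v q hrR hq)
  have hgf := leftInverse_ballSwap u p r
  have hfg : RightInverse (ballSwap u.symm (u p) r) (ballSwap u p r) := by
    have h := leftInverse_ballSwap u.symm (u p) r
    rwa [IsometryEquiv.symm_symm, u.symm_apply_apply] at h
  refine ⟨⟨⟨ballSwap u p r, ballSwap u.symm (u p) r, hgf, hfg⟩,
    isometry_of_leftInverse hgf (hnonexp u p hp) (hnonexp u.symm (u p) hp')⟩, ?_, ?_⟩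
  · exact fun z hz => ballSwap_of_mem u p r hz
  · intro z hz
    simp only [mem_compl_iff, mem_union, not_or] at hz
    exact ballSwap_of_notMem u p r hz.1 hz.2

lemma exists_isometryEquiv_apply_eq_pair (hhom : ∀ x y : X, ∃ g : X ≃ᵢ X, g x = y)
    (hgap : ∀ z w : X, r < dist z w → R ≤ dist z w) (hr : 0 ≤ r) (hrR : r ≤ R) {x b k y : X}
    (hxb : dist x b ∈ Ioc r R) (hky : dist k y ∈ Ioc r R) :
    ∃ w : X ≃ᵢ X, w x = k ∧ w b = y := by
  obtain ⟨u₁, hu₁⟩ := hhom x k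
  obtain ⟨u₂, hu₂⟩ := hhom (u₁ b) y
  have hkb : dist k (u₁ b) = dist x b := by rw [← hu₁, u₁.dist_eq]
  have hby : dist (u₁ b) (u₂ (u₁ b)) ≤ R := by
    rw [hu₂]
    exact (dist_triangle_max _ k y).trans (max_le (dist_comm k (u₁ b) ▸ hkb ▸ hxb.2) hky.2)
  -- move `u₁ b` to `y` by an isometry fixing everything far from both, in particular `k`
  obtain ⟨τ, hτb, hτk⟩ := exists_isometryEquiv_eqOn_closedBall hgap hrR u₂ (u₁ b) hby
  have hk : k ∉ closedBall (u₁ b) r ∪ closedBall (u₂ (u₁ b)) r := by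
    simp only [mem_union, mem_closedBall, hu₂, not_or, not_le, hkb]
    exact ⟨hxb.1, hky.1⟩
  refine ⟨u₁.trans τ, ?_, ?_⟩
  · rw [IsometryEquiv.trans_apply, hu₁, hτk hk, id]
  · rw [IsometryEquiv.trans_apply, hτb (mem_closedBall_self hr), hu₂]

end Homogeneous

section Kaleidoscopical

variable {X : Type*} [PseudoMetricSpace X] [IsUltrametricDist X] {r R : ℝ} {K : Set X}

lemma exists_mem_dist_mem_Ioc_of_inter_ne {x : X} (hx : x ∈ K) (hrR : r ≤ R)
    (h : (⋃ k ∈ K, closedBall k r) ∩ closedBall x R ≠ closedBall x r) :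
    ∃ b ∈ K, dist x b ∈ Ioc r R := by
  have hsub : closedBall x r ⊆ (⋃ k ∈ K, closedBall k r) ∩ closedBall x R :=
    subset_inter (subset_biUnion_of_mem (u := (closedBall · r)) hx)
      (closedBall_subset_closedBall hrR)
  obtain ⟨z, ⟨hzK, hzx⟩, hzr⟩ := exists_of_ssubset (hsub.ssubset_of_ne h.symm)
  obtain ⟨b, hb, hzb⟩ := mem_iUnion₂.mp hzK
  rw [mem_closedBall] at hzx hzb hzr
  refine ⟨b, hb, ?_, ?_⟩
  · by_contra! hxb
    exact hzr ((dist_triangle_max z b x).trans (max_le hzb (dist_comm x b ▸ hxb)))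
  · exact (dist_triangle_max x z b).trans (max_le (dist_comm z x ▸ hzx) (hzb.trans hrR))

lemma closedBall_subset_biUnion_closedBall (hhom : ∀ x y : X, ∃ g : X ≃ᵢ X, g x = y)
    (hgap : ∀ z w : X, r < dist z w → R ≤ dist z w) (hr : 0 ≤ r) (hrR : r ≤ R)
    {C : Type*} {χ : X → C} (hχ : ∀ g : X ≃ᵢ X, BijOn χ (g '' K) univ) {x b : X}
    (hx : x ∈ K) (hb : b ∈ K) (hxb : dist x b ∈ Ioc r R) {x' : X} (hx' : x' ∈ K) :
    closedBall x' R ⊆ ⋃ k ∈ K, closedBall k r := by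
  intro y hy
  by_contra hyK
  simp only [mem_iUnion₂, mem_closedBall, not_exists, not_le] at hyK hy
  obtain ⟨k, hk, hky⟩ : ∃ k ∈ K, χ k = χ y := by
    obtain ⟨-, ⟨k, hk, rfl⟩, hky⟩ := (hχ (IsometryEquiv.refl X)).surjOn (mem_univ (χ y))
    exact ⟨k, hk, hky⟩
  -- `k` and `y` have the same colour, so no translate of `K` contains both
  suffices ∃ g : X ≃ᵢ X, ∃ a ∈ K, ∃ a' ∈ K, g a = k ∧ g a' = y by
    obtain ⟨g, a, ha, a', ha', rfl, rfl⟩ := this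
    have heq := (hχ g).injOn (mem_image_of_mem g ha) (mem_image_of_mem g ha') hky
    have := hyK _ hk
    rw [heq, dist_self] at this
    exact this.not_ge hr
  by_cases hkx' : dist k x' ≤ r
  · have hky' : dist k y ∈ Ioc r R := ⟨dist_comm y k ▸ hyK k hk,
      (dist_triangle_max k x' y).trans (max_le (hkx'.trans hrR) (dist_comm y x' ▸ hy))⟩
    obtain ⟨w, hwx, hwb⟩ := exists_isometryEquiv_apply_eq_pair hhom hgap hr hrR hxb hky'
    exact ⟨w, x, hx, b, hb, hwx, hwb⟩
  · obtain ⟨u, hu⟩ := hhom x' y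
    obtain ⟨σ, hσx', hσk⟩ :=
      exists_isometryEquiv_eqOn_closedBall hgap hrR u x' (by rwa [hu, dist_comm])
    refine ⟨σ, k, hk, x', hx', hσk ?_, (hσx' (mem_closedBall_self hr)).trans hu⟩
    simp only [mem_compl_iff, mem_union, mem_closedBall, hu, not_or, not_le]
    exact ⟨not_le.mp hkx', dist_comm y k ▸ hyK k hk⟩

end Kaleidoscopical

lemma le_dist_of_lt_dist_of_range_eq {X : Type*} [PseudoMetricSpace X] {n : ℕ}
    {ε : Fin (n + 1) → ℝ} (hmono : StrictMono ε)
    (hscale : {r : ℝ | ∃ x y : X, dist x y = r} = range ε) (i : Fin n) (z w : X)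
    (h : ε i.castSucc < dist z w) : ε i.succ ≤ dist z w := by
  obtain ⟨j, hj⟩ : dist z w ∈ range ε := hscale ▸ ⟨z, w, rfl⟩
  rw [← hj] at h ⊢
  exact hmono.monotone (Fin.castSucc_lt_iff_succ_le.mp (hmono.lt_iff_lt.mp h))

/-- Let `(X,d)` be an isometrically homogeneous ultrametric space with
finite distance scale `d(X × X) = {ε_0 < ε_1 < … < ε_n}` with `ε_0 = 0`. Then every
kaleidoscopical configuration `K` in `X` (with respect to the isometry group of `X`) is
`(E_{ε_0}, …, E_{ε_n})`-splittable: for every `i < n` the set `K` is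
`E_{ε_{i+1}}/E_{ε_i}`-parallel or `E_{ε_{i+1}}/E_{ε_i}`-orthogonal, where
`E_ε = {(x,y) : d(x,y) ≤ ε}` and the `E_ε`-class of `x` is the closed ball of radius `ε`
about `x`. -/
theorem stmt12 {X : Type u} [MetricSpace X]
    (hultra : ∀ x y z : X, dist x z ≤ max (dist x y) (dist y z))
    (hhom : ∀ x y : X, ∃ g : X ≃ᵢ X, g x = y)
    (n : ℕ) (ε : Fin (n + 1) → ℝ) (hε0 : ε 0 = 0) (hmono : StrictMono ε)
    (hscale : {r : ℝ | ∃ x y : X, dist x y = r} = Set.range ε)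
    (K : Set X)
    (hK : ∃ (C : Type u) (χ : X → C), Function.Surjective χ ∧
        ∀ g : X ≃ᵢ X, Set.BijOn χ (g '' K) Set.univ) :
    ∀ i : Fin n,
      (∀ x ∈ K, (⋃ k ∈ K, Metric.closedBall k (ε i.castSucc)) ∩
          Metric.closedBall x (ε i.succ) = Metric.closedBall x (ε i.succ)) ∨
      (∀ x ∈ K, (⋃ k ∈ K, Metric.closedBall k (ε i.castSucc)) ∩
          Metric.closedBall x (ε i.succ) = Metric.closedBall x (ε i.castSucc)) := by
  have : IsUltrametricDist X := ⟨hultra⟩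
  obtain ⟨C, χ, -, hχ⟩ := hK
  intro i
  have hr : 0 ≤ ε i.castSucc := hε0 ▸ hmono.monotone (Fin.zero_le _)
  have hrR : ε i.castSucc ≤ ε i.succ := (hmono Fin.castSucc_lt_succ).le
  refine or_iff_not_imp_right.mpr fun horth => ?_
  push Not at horth
  obtain ⟨x, hx, hne⟩ := horth
  obtain ⟨b, hb, hxb⟩ := exists_mem_dist_mem_Ioc_of_inter_ne hx hrR hne
  exact fun x' hx' => inter_eq_right.mpr <| closedBall_subset_biUnion_closedBall hhom
    (le_dist_of_lt_dist_of_range_eq hmono hscale i) hr hrR hχ hx hb hxb hx'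
end

section
/- Let X be a metric space and G a group of isometries of X. Every infinite rigid subset K ⊆ X of cardinality |K| ≥ |G| is kaleidoscopical: there exists a coloring χ : X → C (a surjection onto a set C of cardinality |K|) whose restriction to g(K) is a bijection onto C for every g ∈ G. -/
universe u

/-- The distance scale `d(K × K) = {d(a,b) : a, b ∈ K}` of a subset of a metric space. -/
def DistSet {X : Type u} [MetricSpace X] (K : Set X) : Set ℝ :=
  {r : ℝ | ∃ a ∈ K, ∃ b ∈ K, dist a b = r}

/-- A subset `K` of a metric space is rigid if for any pairwise distinct `x, y, z ∈ K`
and any `r_x, r_y, r_z ∈ d(K × K)` the spheres `S(x,r_x)`, `S(y,r_y)`, `S(z,r_z)` have no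
common point outside `K`. -/
def Rigid {X : Type u} [MetricSpace X] (K : Set X) : Prop :=
  ∀ x ∈ K, ∀ y ∈ K, ∀ z ∈ K, x ≠ y → y ≠ z → x ≠ z →
    ∀ rx ∈ DistSet K, ∀ ry ∈ DistSet K, ∀ rz ∈ DistSet K,
      ∀ p, p ∉ K → ¬(dist p x = rx ∧ dist p y = ry ∧ dist p z = rz)

/-!
Enumerate, in order type `|K|`, the `|G| * |K| = |K|` tasks "color the point `g k`" and "use the
color `c` on `g '' K`", and perform them greedily, never giving one color to two points of a
common translate `h '' K`. Before each stage fewer than `|K|` points are colored. Rigidity keeps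
every task feasible: a point `q ∉ g '' K` shares a translate with `g x₀` only if `g⁻¹ q` lies at
a distance from `d(K × K)` to `x₀ ∈ K`, so each earlier point of color `c` rules out at most two
points of `g '' K`.
-/

open Set Function
open Cardinal hiding univ

namespace Kaleidoscopic

variable {X C I : Type u} (f : I → C → X)

def Linked (p q : X) : Prop :=
  ∃ i, p ∈ range (f i) ∧ q ∈ range (f i)

variable {f} in
theorem Linked.symm {p q : X} (h : Linked f p q) : Linked f q p :=
  let ⟨i, hp, hq⟩ := h
  ⟨i, hq, hp⟩

def IsSafe (D : Set (X × C)) (pc : X × C) : Prop :=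
  pc.1 ∉ Prod.fst '' D ∧ ∀ q, (q, pc.2) ∈ D → ¬Linked f pc.1 q

/-- `inl (i, c)` asks to color the point `f i c`, `inr (i, c)` to use the color `c` in the
block `range (f i)`. -/
abbrev Task (I C : Type u) : Type u := (I × C) ⊕ (I × C)

def candidates : Task I C → Set (X × C)
  | .inl (i, c) => {f i c} ×ˢ univ
  | .inr (i, c) => range (f i) ×ˢ {c}

open Classical in
noncomputable def extend (D : Set (X × C)) (t : Task I C) : Option (X × C) :=
  if h : ∃ pc ∈ candidates f t, IsSafe f D pc then some h.choose else none

theorem isSafe_of_extend_eq_some {D : Set (X × C)} {t : Task I C} {pc : X × C}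
    (h : extend f D t = some pc) : IsSafe f D pc := by
  unfold extend at h
  split_ifs at h with hex
  exact Option.some_injective _ h ▸ hex.choose_spec.2

theorem exists_extend_eq_some {D : Set (X × C)} {t : Task I C}
    (h : ∃ pc ∈ candidates f t, IsSafe f D pc) :
    ∃ pc ∈ candidates f t, extend f D t = some pc := by
  classical
  exact ⟨h.choose, h.choose_spec.1, by rw [extend, dif_pos h]⟩

theorem exists_isSafe_of_mk_lt {D : Set (X × C)} (hD : #D < #C) {p : X}
    (hp : p ∉ Prod.fst '' D) : ∃ c, IsSafe f D (p, c) := by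
  have hused : Prod.snd '' D ≠ univ := fun h => by
    have := (mk_image_le (f := Prod.snd) (s := D)).trans_lt hD
    rw [h, mk_univ] at this
    exact lt_irrefl _ this
  obtain ⟨c, hc⟩ := (ne_univ_iff_exists_notMem _).1 hused
  exact ⟨c, hp, fun q hq _ => hc ⟨(q, c), hq, rfl⟩⟩

theorem exists_isSafe_mem_range {m : Cardinal} (hC : ℵ₀ ≤ #C) (hm : m < #C) {i : I}
    (hi : Injective (f i))
    (hlink : ∀ q ∉ range (f i), #{x ∈ range (f i) | Linked f x q} ≤ m)
    {D : Set (X × C)} (hD : #D < #C) {c : C} (hc : ∀ x ∈ range (f i), (x, c) ∉ D) :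
    ∃ x ∈ range (f i), IsSafe f D (x, c) := by
  set Q := {q | (q, c) ∈ D}
  set bad := Prod.fst '' D ∪ ⋃ q ∈ Q, {x ∈ range (f i) | Linked f x q}
  have hQ : #Q < #C :=
    (mk_preimage_of_injective (fun q => (q, c)) D fun _ _ h => (Prod.mk.inj h).1).trans_lt hD
  have hbad : #bad < #C := by
    refine (mk_union_le _ _).trans_lt (add_lt_of_lt hC (mk_image_le.trans_lt hD) ?_)
    refine (mk_biUnion_le _ Q).trans_lt (mul_lt_of_lt hC hQ (lt_of_le_of_lt ?_ hm))
    exact ciSup_le' fun q => hlink q.1 fun hq => hc q.1 hq q.2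
  obtain ⟨x, hx, hxbad⟩ := not_subset.1 fun h : range (f i) ⊆ bad =>
    (mk_le_mk_of_subset h).not_gt (by rwa [mk_range_eq _ hi])
  refine ⟨x, hx, fun hx' => hxbad (.inl hx'), fun q hq hlk => hxbad (.inr ?_)⟩
  exact mem_biUnion hq ⟨hx, hlk⟩

variable {ι : Type u} [LinearOrder ι] [WellFoundedLT ι] (e : ι → Task I C)

/-- Stage `i` performs the task `e i` greedily, given the partial coloring built before `i`. -/
noncomputable def greedy : ι → Option (X × C) :=
  WellFoundedLT.fix fun i F => extend f {pc | ∃ j, ∃ h : j < i, F j h = some pc} (e i)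

def coloredBefore (i : ι) : Set (X × C) :=
  {pc | ∃ j < i, greedy f e j = some pc}

def colored : Set (X × C) :=
  {pc | ∃ i, greedy f e i = some pc}

theorem greedy_eq (i : ι) : greedy f e i = extend f (coloredBefore f e i) (e i) := by
  rw [greedy, WellFoundedLT.fix_eq]
  simp only [coloredBefore, greedy, exists_prop]

theorem mk_coloredBefore_le (i : ι) : #(coloredBefore f e i) ≤ #(Iio i) := by
  have : coloredBefore f e i = some ⁻¹' (greedy f e '' Iio i) := by
    ext pc
    simp [coloredBefore]
  rw [this]
  exact (mk_preimage_of_injective _ _ (Option.some_injective _)).trans mk_image_le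

theorem coloredBefore_subset_colored (i : ι) : coloredBefore f e i ⊆ colored f e :=
  fun _ ⟨j, _, hj⟩ => ⟨j, hj⟩

theorem greedy_apart {i j : ι} (hij : i ≠ j) {p q : X} {c c' : C}
    (hi : greedy f e i = some (p, c)) (hj : greedy f e j = some (q, c')) :
    p ≠ q ∧ (c = c' → ¬Linked f p q) := by
  wlog hlt : j < i generalizing i j p q c c'
  · have := this hij.symm hj hi (hij.lt_or_gt.resolve_right hlt)
    exact ⟨this.1.symm, fun hcc h => this.2 hcc.symm h.symm⟩
  have hsafe := isSafe_of_extend_eq_some f (greedy_eq f e i ▸ hi)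
  refine ⟨fun hpq => hsafe.1 ⟨(q, c'), ⟨j, hlt, hj⟩, hpq.symm⟩, ?_⟩
  rintro rfl
  exact hsafe.2 q ⟨j, hlt, hj⟩

theorem colored_functional {p : X} {c c' : C} (h : (p, c) ∈ colored f e)
    (h' : (p, c') ∈ colored f e) : c = c' := by
  obtain ⟨i, hi⟩ := h
  obtain ⟨j, hj⟩ := h'
  obtain rfl | hij := eq_or_ne i j
  · exact (Prod.mk.inj (Option.some_injective _ (hi.symm.trans hj))).2
  · exact absurd rfl (greedy_apart f e hij hi hj).1

theorem eq_of_linked_of_mem_colored {p q : X} {c : C} (hp : (p, c) ∈ colored f e)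
    (hq : (q, c) ∈ colored f e) (hpq : Linked f p q) : p = q := by
  obtain ⟨i, hi⟩ := hp
  obtain ⟨j, hj⟩ := hq
  obtain rfl | hij := eq_or_ne i j
  · exact (Prod.mk.inj (Option.some_injective _ (hi.symm.trans hj))).1
  · exact absurd hpq ((greedy_apart f e hij hi hj).2 rfl)

section Surjective

variable {e} (he : Surjective e) (hsmall : ∀ i, #(coloredBefore f e i) < #C)
include he hsmall

theorem exists_apply_mem_colored (i : I) (c : C) : ∃ c', (f i c, c') ∈ colored f e := by
  obtain ⟨s, hs⟩ := he (.inl (i, c))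
  by_cases hdone : f i c ∈ Prod.fst '' coloredBefore f e s
  · obtain ⟨⟨_, c'⟩, hc', rfl⟩ := hdone
    exact ⟨c', coloredBefore_subset_colored f e s hc'⟩
  obtain ⟨c', hc'⟩ := exists_isSafe_of_mk_lt f (hsmall s) hdone
  obtain ⟨⟨p, c''⟩, hmem, hpc⟩ :=
    exists_extend_eq_some f (t := .inl (i, c)) ⟨(f i c, c'), by simp [candidates], hc'⟩
  obtain rfl : p = f i c := by simpa [candidates] using hmem
  exact ⟨c'', s, by rw [greedy_eq, hs, hpc]⟩

theorem exists_mem_range_mem_colored {m : Cardinal} (hC : ℵ₀ ≤ #C) (hm : m < #C) {i : I}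
    (hi : Injective (f i))
    (hlink : ∀ q ∉ range (f i), #{x ∈ range (f i) | Linked f x q} ≤ m) (c : C) :
    ∃ x ∈ range (f i), (x, c) ∈ colored f e := by
  obtain ⟨s, hs⟩ := he (.inr (i, c))
  by_cases hdone : ∃ x ∈ range (f i), (x, c) ∈ coloredBefore f e s
  · obtain ⟨x, hx, hxc⟩ := hdone
    exact ⟨x, hx, coloredBefore_subset_colored f e s hxc⟩
  push Not at hdone
  obtain ⟨x, hx, hxc⟩ := exists_isSafe_mem_range f hC hm hi hlink (hsmall s) hdone
  obtain ⟨⟨y, c'⟩, hmem, hyc⟩ :=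
    exists_extend_eq_some f (t := .inr (i, c)) ⟨(x, c), by simp [candidates, hx], hxc⟩
  obtain ⟨hy, rfl⟩ : y ∈ range (f i) ∧ c' = c := by simpa [candidates] using hmem
  exact ⟨y, hy, s, by rw [greedy_eq, hs, hyc]⟩

end Surjective

theorem exists_bijOn_of_rel [Nonempty C] (R : Set (X × C))
    (hfun : ∀ p c c', (p, c) ∈ R → (p, c') ∈ R → c = c')
    (hinj : ∀ p q c, (p, c) ∈ R → (q, c) ∈ R → Linked f p q → p = q)
    (hdom : ∀ i c, ∃ c', (f i c, c') ∈ R) (hran : ∀ i c, ∃ x ∈ range (f i), (x, c) ∈ R) :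
    ∃ χ : X → C, ∀ i, BijOn χ (range (f i)) univ := by
  classical
  let χ x := if h : ∃ c, (x, c) ∈ R then h.choose else Classical.arbitrary C
  have hχ : ∀ x c, (x, c) ∈ R → χ x = c := fun x c hxc => by
    have h : ∃ c, (x, c) ∈ R := ⟨c, hxc⟩
    simpa [χ, h] using hfun x _ _ h.choose_spec hxc
  refine ⟨χ, fun i => ⟨mapsTo_univ _ _, ?_, fun c _ => ?_⟩⟩
  · rintro _ ⟨a, rfl⟩ _ ⟨b, rfl⟩ hab
    obtain ⟨c, hc⟩ := hdom i a
    obtain ⟨c', hc'⟩ := hdom i b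
    rw [hχ _ _ hc, hχ _ _ hc'] at hab
    exact hinj _ _ _ hc (hab ▸ hc') ⟨i, mem_range_self a, mem_range_self b⟩
  · obtain ⟨x, hx, hxc⟩ := hran i c
    exact ⟨x, hx, hχ x c hxc⟩

theorem exists_bijOn_range [Infinite C] {m : Cardinal} (hI : #I ≤ #C) (hm : m < #C)
    (hf : ∀ i, Injective (f i))
    (hlink : ∀ i, ∀ q ∉ range (f i), #{x ∈ range (f i) | Linked f x q} ≤ m) :
    ∃ χ : X → C, ∀ i, BijOn χ (range (f i)) univ := by
  rcases isEmpty_or_nonempty I with hI₀ | hI₀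
  · exact ⟨fun _ => Classical.arbitrary C, isEmptyElim⟩
  have hC : ℵ₀ ≤ #C := aleph0_le_mk C
  have htask : #(Task I C) ≤ #(#C).ord.ToType := by
    have hIC : #(I × C) ≤ #C := by
      simpa [mul_eq_self hC] using mul_le_mul_left hI #C
    simpa [add_eq_self hC] using add_le_add hIC hIC
  obtain ⟨e, he⟩ : ∃ e : (#C).ord.ToType → Task I C, Surjective e :=
    exists_surjective_iff.2 ⟨inferInstance, (le_def _ _).1 htask⟩
  have hsmall : ∀ i, #(coloredBefore f e i) < #C := fun i =>
    (mk_coloredBefore_le f e i).trans_lt (by simpa using mk_Iio_lt i)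
  exact exists_bijOn_of_rel f (colored f e) (fun _ _ _ => colored_functional f e)
    (fun _ _ _ => eq_of_linked_of_mem_colored f e) (exists_apply_mem_colored f he hsmall)
    (fun i => exists_mem_range_mem_colored f he hsmall hC hm (hf i) (hlink i))

end Kaleidoscopic

section Rigid

variable {X : Type u} [MetricSpace X] {K : Set X}

theorem Rigid.exists_subset_pair (hK : Rigid K) {p : X} (hp : p ∉ K) :
    ∃ a b, {x ∈ K | dist p x ∈ DistSet K} ⊆ {a, b} := by
  by_contra! H
  obtain ⟨x, hx, -⟩ := not_subset.1 (H p p)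
  obtain ⟨y, hy, hyx⟩ := not_subset.1 (H x x)
  obtain ⟨z, hz, hzxy⟩ := not_subset.1 (H x y)
  simp only [mem_insert_iff, mem_singleton_iff, not_or] at hyx hzxy
  exact hK x hx.1 y hy.1 z hz.1 (Ne.symm hyx.1) (Ne.symm hzxy.2) (Ne.symm hzxy.1)
    _ hx.2 _ hy.2 _ hz.2 p hp ⟨rfl, rfl, rfl⟩

theorem Rigid.mk_le_two (hK : Rigid K) {p : X} (hp : p ∉ K) :
    #{x ∈ K | dist p x ∈ DistSet K} ≤ 2 := by
  obtain ⟨a, b, h⟩ := hK.exists_subset_pair hp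
  calc #{x ∈ K | dist p x ∈ DistSet K} ≤ #({a, b} : Set X) := mk_le_mk_of_subset h
    _ ≤ #({b} : Set X) + 1 := mk_insert_le
    _ = 2 := by rw [mk_singleton, one_add_one_eq_two]

/-- Pulled back by `φ i`, the point `q` lies at distances from `d(K × K)` to all the points it
is linked to. -/
theorem Rigid.mk_linked_le_two {I : Type u} (hK : Rigid K) (φ : I → X ≃ᵢ X) (i : I) {q : X}
    (hq : q ∉ range fun k : K => φ i k) :
    #{x ∈ range (fun k : K => φ i k) |
      Kaleidoscopic.Linked (fun (j : I) (k : K) => φ j k) x q} ≤ 2 := by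
  have hq' : (φ i).symm q ∉ K := fun h => hq ⟨⟨_, h⟩, (φ i).apply_symm_apply q⟩
  refine (mk_le_mk_of_subset ?_).trans ((mk_image_le (f := φ i)).trans (hK.mk_le_two hq'))
  rintro _ ⟨⟨k, rfl⟩, j, ⟨u, hu⟩, ⟨v, rfl⟩⟩
  refine ⟨k.1, ⟨k.2, v, v.2, u, u.2, ?_⟩, rfl⟩
  simp only at hu ⊢
  rw [← (φ i).dist_eq ((φ i).symm _), IsometryEquiv.apply_symm_apply, ← hu, (φ j).dist_eq]

end Rigid

/-- Let `X` be a metric space and `G` a group of isometries of `X`. Every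
infinite rigid subset `K ⊆ X` of cardinality `|K| ≥ |G|` is kaleidoscopical: there is a
surjective coloring `χ : X → C` onto a set of cardinality `|K|` whose restriction to
every `g(K)`, `g ∈ G`, is a bijection onto `C`. -/
theorem stmt13 {X : Type u} [MetricSpace X] (G : Subgroup (X ≃ᵢ X))
    (K : Set X) (hinf : K.Infinite) (hGK : Cardinal.mk G ≤ Cardinal.mk K)
    (hrigid : Rigid K) :
    ∃ (C : Type u) (χ : X → C), Cardinal.mk C = Cardinal.mk K ∧ Function.Surjective χ ∧
      ∀ g : G, Set.BijOn χ ((g : X ≃ᵢ X) '' K) Set.univ := by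
  have := hinf.to_subtype
  have hrange (g : G) : (range fun k : K => (g : X ≃ᵢ X) k) = (g : X ≃ᵢ X) '' K :=
    (image_eq_range _ _).symm
  obtain ⟨χ, hχ⟩ := Kaleidoscopic.exists_bijOn_range (fun (g : G) (k : K) => (g : X ≃ᵢ X) k)
    hGK (ofNat_lt_aleph0.trans_le (aleph0_le_mk K))
    (fun g => g.1.injective.comp Subtype.val_injective)
    (fun g _ hq => hrigid.mk_linked_le_two Subtype.val g hq)
  refine ⟨K, χ, rfl, fun c => ?_, fun g => hrange g ▸ hχ g⟩
  obtain ⟨x, -, hx⟩ := hχ 1 |>.surjOn (mem_univ c)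
  exact ⟨x, hx⟩
end

section
/- Let X be a transitive G-space. If every kaleidoscopical configuration K ⊆ X is splittable, then X has the semi-Hajós property. -/
open Pointwise

universe u v

/-- An equivalence relation `E` on a `G`-space `X` is `G`-invariant. -/
def SetoidInvariant (G : Type v) [Group G] {X : Type u} [MulAction G X]
    (E : Setoid X) : Prop :=
  ∀ (g : G) (x y : X), E.r x y → E.r (g • x) (g • y)

/-- `K` is a kaleidoscopical configuration in the `G`-space `X`. -/
def Kaleidoscopical (G : Type v) [Group G] {X : Type u} [MulAction G X]
    (K : Set X) : Prop :=
  ∃ (C : Type u) (χ : X → C), Function.Surjective χ ∧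
    ∀ g : G, Set.BijOn χ (g • K) Set.univ

/-- `K` is `F/E`-parallel: `[K]_E ∩ [x]_F = [x]_F` for all `x ∈ K`. -/
def ParallelRel {X : Type u} (K : Set X) (E F : Setoid X) : Prop :=
  ∀ x ∈ K, {y | ∃ k ∈ K, E.r k y} ∩ {y | F.r x y} = {y | F.r x y}

/-- `K` is `F/E`-orthogonal: `[K]_E ∩ [x]_F = [x]_E` for all `x ∈ K`. -/
def OrthogonalRel {X : Type u} (K : Set X) (E F : Setoid X) : Prop :=
  ∀ x ∈ K, {y | ∃ k ∈ K, E.r k y} ∩ {y | F.r x y} = {y | E.r x y}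

/-- `K ⊆ X` is splittable: there is an increasing chain
`Δ_X = E_0 ⊆ E_1 ⊆ … ⊆ E_m = X × X` of `G`-invariant equivalence relations such that for
every `i < m` the set `K` is `E_{i+1}/E_i`-parallel or `E_{i+1}/E_i`-orthogonal. -/
def Splittable (G : Type v) [Group G] {X : Type u} [MulAction G X] (K : Set X) : Prop :=
  ∃ (m : ℕ) (E : Fin (m + 1) → Setoid X), Monotone E ∧ E 0 = ⊥ ∧ E (Fin.last m) = ⊤ ∧
    (∀ i, SetoidInvariant G (E i)) ∧
    ∀ i : Fin m, ParallelRel K (E i.castSucc) (E i.succ) ∨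
      OrthogonalRel K (E i.castSucc) (E i.succ)

/-- The projection `K/E` is a kaleidoscopical configuration in the quotient `G`-space
`X/E` (for `G`-invariant `E`, translates of `K/E` are exactly the projections of the
translates `gK`). -/
def KaleidoscopicalQuot (G : Type v) [Group G] {X : Type u} [MulAction G X]
    (E : Setoid X) (K : Set X) : Prop :=
  ∃ (C : Type u) (χ : Quotient E → C), Function.Surjective χ ∧
    ∀ g : G, Set.BijOn χ (Quotient.mk E '' (g • K)) Set.univ

/-- The `G`-space `X` has the semi-Hajós property: for each kaleidoscopical configuration
`K ⊊ X` there is a `G`-invariant equivalence relation `E ≠ Δ_X` such that `K` is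
`E`-parallel or `E`-orthogonal (i.e. `E/Δ_X`-parallel or `E/Δ_X`-orthogonal) and `K/E` is
kaleidoscopical in `X/E`. -/
def SemiHajosSpace (G : Type v) [Group G] (X : Type u) [MulAction G X] : Prop :=
  ∀ K : Set X, K ≠ Set.univ → Kaleidoscopical G K →
    ∃ E : Setoid X, E ≠ ⊥ ∧ SetoidInvariant G E ∧
      (ParallelRel K ⊥ E ∨ OrthogonalRel K ⊥ E) ∧ KaleidoscopicalQuot G E K

namespace Stmt17Aux
variable {G : Type v} [Group G] {X : Type u} [MulAction G X]

noncomputable def sq (E : Setoid X) (hE : SetoidInvariant G E) (g : G) :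
    Quotient E → Quotient E :=
  Quot.lift (fun x => Quotient.mk E (g • x)) (fun a b hab => Quot.sound (hE g a b hab))

@[simp] lemma sq_mk (E : Setoid X) (hE : SetoidInvariant G E) (g : G) (x : X) :
    sq E hE g (Quotient.mk E x) = Quotient.mk E (g • x) := rfl

lemma sq_inv_sq (E : Setoid X) (hE : SetoidInvariant G E) (g : G) (q : Quotient E) :
    sq E hE g⁻¹ (sq E hE g q) = q := by
  induction q using Quot.ind with
  | _ x => show Quotient.mk E (g⁻¹ • g • x) = Quotient.mk E x
           rw [inv_smul_smul]

lemma sq_sq_inv (E : Setoid X) (hE : SetoidInvariant G E) (g : G) (q : Quotient E) :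
    sq E hE g (sq E hE g⁻¹ q) = q := by
  induction q using Quot.ind with
  | _ x => show Quotient.mk E (g • g⁻¹ • x) = Quotient.mk E x
           rw [smul_inv_smul]

noncomputable def pq (E F : Setoid X) (h : E ≤ F) : Quotient E → Quotient F :=
  Quot.lift (fun x => Quotient.mk F x) (fun _ _ hab => Quot.sound (h hab))

@[simp] lemma pq_mk (E F : Setoid X) (h : E ≤ F) (x : X) :
    pq E F h (Quotient.mk E x) = Quotient.mk F x := rfl

lemma pq_sq (E F : Setoid X) (h : E ≤ F) (hE : SetoidInvariant G E)
    (hF : SetoidInvariant G F) (g : G) (q : Quotient E) :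
    pq E F h (sq E hE g q) = sq F hF g (pq E F h q) := by
  induction q using Quot.ind with
  | _ x => rfl

lemma pq_surj (E F : Setoid X) (h : E ≤ F) : Function.Surjective (pq E F h) := by
  intro z
  obtain ⟨y, hy⟩ := Quotient.exists_rep z
  exact ⟨Quotient.mk E y, by rw [← hy]; rfl⟩

lemma chain_main (htrans : ∀ x y : X, ∃ g : G, g • x = y)
    (K : Set X) (hK : K.Nonempty) :
    ∀ (n : ℕ) (F : ℕ → Setoid X), Monotone F → F n = ⊤ →
      (∀ i, SetoidInvariant G (F i)) →
      (∀ i, i < n → (ParallelRel K (F i) (F (i + 1)) ∨ OrthogonalRel K (F i) (F (i + 1)))) →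
      ∃ (C : Type u) (χ : Quotient (F 0) → C), Function.Surjective χ ∧
        ∀ g : G, Set.BijOn χ (Quotient.mk (F 0) '' (g • K)) Set.univ := by
  intro n
  induction n with
  | zero =>
    intro F _ htop _ _
    obtain ⟨k₀, hk₀⟩ := hK
    refine ⟨PUnit.{u+1}, fun _ => PUnit.unit, fun b => ⟨Quotient.mk (F 0) k₀, rfl⟩, fun g =>
      ⟨fun _ _ => Set.mem_univ _, ?_, ?_⟩⟩
    · intro q _ q' _ _
      induction q using Quot.ind with
      | _ x =>
        induction q' using Quot.ind with
        | _ y => exact Quot.sound (show (F 0).r x y by rw [htop]; simp [Setoid.top_def])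
    · intro b _
      exact ⟨Quotient.mk (F 0) (g • k₀), ⟨g • k₀, Set.smul_mem_smul_set hk₀, rfl⟩, rfl⟩
  | succ n ih =>
    intro F hmono htop hinv hstep
    obtain ⟨C', ψ, hψs, hψb⟩ := ih (fun j => F (j + 1))
      (fun a b hab => hmono (by omega)) htop (fun i => hinv (i + 1))
      (fun i hi => hstep (i + 1) (by omega))
    have h01 : F 0 ≤ F 1 := hmono (by omega)
    rcases hstep 0 (by omega) with hpar | horth
    · -- parallel case
      obtain ⟨x₀, hx₀⟩ := hK
      have hex : ∀ z : Quotient (F 1), ∃ g : G, Quotient.mk (F 1) (g • x₀) = z := by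
        intro z
        obtain ⟨y, hy⟩ := Quotient.exists_rep z
        obtain ⟨g, hg⟩ := htrans x₀ y
        exact ⟨g, by rw [hg, hy]⟩
      choose τ hτ using hex
      have hfib : ∀ (z : Quotient (F 1)) (q : Quotient (F 0)), pq (F 0) (F 1) h01 q = z →
          pq (F 0) (F 1) h01 (sq (F 0) (hinv 0) (τ z)⁻¹ q) = Quotient.mk (F 1) x₀ := by
        intro z q hq
        rw [pq_sq (F 0) (F 1) h01 (hinv 0) (hinv 1), hq]
        set w := τ z with hwdef
        rw [← hτ z, ← hwdef, sq_mk, inv_smul_smul]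
      have hpz : ∀ (z : Quotient (F 1)) (t : {q : Quotient (F 0) //
          pq (F 0) (F 1) h01 q = Quotient.mk (F 1) x₀}),
          pq (F 0) (F 1) h01 (sq (F 0) (hinv 0) (τ z) t.1) = z := by
        intro z t
        rw [pq_sq (F 0) (F 1) h01 (hinv 0) (hinv 1), t.2]
        exact hτ z
      refine ⟨C' × {q : Quotient (F 0) // pq (F 0) (F 1) h01 q = Quotient.mk (F 1) x₀},
        fun q => (ψ (pq (F 0) (F 1) h01 q),
          ⟨sq (F 0) (hinv 0) (τ (pq (F 0) (F 1) h01 q))⁻¹ q, hfib _ q rfl⟩), ?_, ?_⟩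
      · -- surjectivity
        rintro ⟨c, t⟩
        obtain ⟨z, hz⟩ := hψs c
        refine ⟨sq (F 0) (hinv 0) (τ z) t.1, ?_⟩
        refine Prod.ext ?_ (Subtype.ext ?_)
        · show ψ _ = c
          rw [hpz z t, hz]
        · show sq (F 0) (hinv 0) (τ (pq (F 0) (F 1) h01 _))⁻¹ _ = t.1
          rw [hpz z t, sq_inv_sq]
      · intro g
        refine ⟨fun _ _ => Set.mem_univ _, ?_, ?_⟩
        · -- InjOn
          rintro q ⟨y, hy, rfl⟩ q' ⟨y', hy', rfl⟩ heq
          have h1 : ψ (pq (F 0) (F 1) h01 (Quotient.mk (F 0) y)) =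
              ψ (pq (F 0) (F 1) h01 (Quotient.mk (F 0) y')) := congrArg Prod.fst heq
          have hzz : pq (F 0) (F 1) h01 (Quotient.mk (F 0) y) =
              pq (F 0) (F 1) h01 (Quotient.mk (F 0) y') :=
            (hψb g).2.1 ⟨y, hy, rfl⟩ ⟨y', hy', rfl⟩ h1
          have h2 := congrArg (fun r => (Prod.snd r).1) heq
          simp only at h2
          rw [hzz] at h2
          have h3 := congrArg
            (sq (F 0) (hinv 0) (τ (pq (F 0) (F 1) h01 (Quotient.mk (F 0) y')))) h2
          rwa [sq_sq_inv, sq_sq_inv] at h3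
        · -- SurjOn
          rintro ⟨c, t⟩ -
          obtain ⟨z, hzmem, hψz⟩ := (hψb g).2.2 (Set.mem_univ c)
          obtain ⟨y, hy, rfl⟩ := hzmem
          obtain ⟨k, hk, rfl⟩ := hy
          obtain ⟨w, hw⟩ :=
            Quotient.exists_rep (sq (F 0) (hinv 0) (τ (Quotient.mk (F 1) (g • k))) t.1)
          have hww : Quotient.mk (F 1) w = Quotient.mk (F 1) (g • k) := by
            rw [← hpz (Quotient.mk (F 1) (g • k)) t, ← hw]
            rfl
          have hr1 : (F 1).r (g • k) w := (F 1).iseqv.symm (Quotient.exact hww)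
          have hr1' : (F 1).r k (g⁻¹ • w) := by
            have := hinv 1 g⁻¹ _ _ hr1
            rwa [inv_smul_smul] at this
          have hmem : (g⁻¹ • w) ∈ ({y | ∃ m ∈ K, (F 0).r m y} ∩ {y | (F 1).r k y}) := by
            rw [hpar k hk]
            exact hr1'
          obtain ⟨⟨mm, hmm, h0⟩, -⟩ := hmem
          have h0' : (F 0).r (g • mm) w := by
            have := hinv 0 g _ _ h0
            rwa [smul_inv_smul] at this
          refine ⟨sq (F 0) (hinv 0) (τ (Quotient.mk (F 1) (g • k))) t.1,
            ⟨g • mm, Set.smul_mem_smul_set hmm, ?_⟩, ?_⟩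
          · rw [← hw]
            exact Quot.sound h0'
          · refine Prod.ext ?_ (Subtype.ext ?_)
            · show ψ _ = c
              rw [hpz (Quotient.mk (F 1) (g • k)) t]
              exact hψz
            · show sq (F 0) (hinv 0) (τ (pq (F 0) (F 1) h01 _))⁻¹ _ = t.1
              rw [hpz (Quotient.mk (F 1) (g • k)) t, sq_inv_sq]
    · -- orthogonal case
      refine ⟨C', fun q => ψ (pq (F 0) (F 1) h01 q), hψs.comp (pq_surj _ _ _), fun g =>
        ⟨fun _ _ => Set.mem_univ _, ?_, ?_⟩⟩
      · rintro q ⟨y, hy, rfl⟩ q' ⟨y', hy', rfl⟩ heq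
        have hzz : Quotient.mk (F 1) y = Quotient.mk (F 1) y' :=
          (hψb g).2.1 ⟨y, hy, rfl⟩ ⟨y', hy', rfl⟩ heq
        rw [Set.mem_smul_set] at hy hy'
        obtain ⟨k, hk, rfl⟩ := hy
        obtain ⟨k', hk', rfl⟩ := hy'
        have hr1 : (F 1).r k k' := by
          have := hinv 1 g⁻¹ _ _ (Quotient.exact hzz)
          rwa [inv_smul_smul, inv_smul_smul] at this
        have hmem : k' ∈ ({y | ∃ m ∈ K, (F 0).r m y} ∩ {y | (F 1).r k y}) :=
          ⟨⟨k', hk', (F 0).iseqv.refl k'⟩, hr1⟩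
        rw [horth k hk] at hmem
        exact Quot.sound (hinv 0 g _ _ hmem)
      · rintro b -
        obtain ⟨z, hzmem, hψz⟩ := (hψb g).2.2 (Set.mem_univ b)
        obtain ⟨y, hy, rfl⟩ := hzmem
        exact ⟨Quotient.mk (F 0) y, ⟨y, hy, rfl⟩, hψz⟩

end Stmt17Aux

/-- If every kaleidoscopical configuration in a transitive `G`-space `X` is
splittable, then `X` has the semi-Hajós property. -/
theorem stmt17 {G : Type v} [Group G] {X : Type u} [MulAction G X]
    (htrans : ∀ x y : X, ∃ g : G, g • x = y)
    (h : ∀ K : Set X, Kaleidoscopical G K → Splittable G K) :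
    SemiHajosSpace G X := by
  classical
  intro K hKuniv hKal
  -- K is nonempty
  have hX : Nonempty X := by
    by_contra hX
    exact hKuniv (Set.eq_univ_of_forall fun x => absurd ⟨x⟩ hX)
  obtain ⟨x⟩ := hX
  obtain ⟨Ck, χk, hχs, hχb⟩ := hKal
  have hKne : K.Nonempty := by
    obtain ⟨y, hy, -⟩ := (hχb 1).2.2 (Set.mem_univ (χk x))
    rw [Set.mem_smul_set] at hy
    obtain ⟨k, hk, -⟩ := hy
    exact ⟨k, hk⟩
  obtain ⟨k₀, hk₀⟩ := hKne
  obtain ⟨w, hw⟩ := Set.ne_univ_iff_exists_notMem K |>.mp hKuniv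
  have hkw : k₀ ≠ w := fun e => hw (e ▸ hk₀)
  have hbt : (⊤ : Setoid X) ≠ (⊥ : Setoid X) := by
    intro e
    have : (⊤ : Setoid X).r k₀ w := by simp [Setoid.top_def]
    rw [e] at this
    exact hkw (by simpa [Setoid.bot_def] using this)
  obtain ⟨m, Ec, hmono, h0, hlast, hinvc, hstepc⟩ := h K ⟨Ck, χk, hχs, hχb⟩
  set D : ℕ → Setoid X := fun j => Ec ⟨min j m, by omega⟩ with hD
  have hDval : ∀ j (hj : j ≤ m), D j = Ec ⟨j, by omega⟩ := by
    intro j hj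
    simp only [hD]
    congr 1
    exact Fin.ext (by simp; omega)
  have hDmono : Monotone D := by
    intro a b hab
    exact hmono (by simp [Fin.le_def]; omega)
  have hD0 : D 0 = ⊥ := by rw [hDval 0 (by omega), ← h0]; congr 1
  have hDm : D m = ⊤ := by
    rw [hDval m le_rfl, ← hlast]
    congr 1
  have hDstep : ∀ j, j < m →
      (ParallelRel K (D j) (D (j + 1)) ∨ OrthogonalRel K (D j) (D (j + 1))) := by
    intro j hj
    have := hstepc ⟨j, hj⟩
    rw [hDval j (by omega), hDval (j + 1) (by omega)]
    have e1 : (Fin.castSucc ⟨j, hj⟩ : Fin (m + 1)) = ⟨j, by omega⟩ := rfl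
    have e2 : (Fin.succ ⟨j, hj⟩ : Fin (m + 1)) = ⟨j + 1, by omega⟩ := rfl
    rwa [e1, e2] at this
  have hPex : ∃ j, D j ≠ ⊥ := ⟨m, by rw [hDm]; exact hbt⟩
  set i := Nat.find hPex with hidef
  have hi : D i ≠ ⊥ := Nat.find_spec hPex
  have hmin : ∀ j, j < i → D j = ⊥ := fun j hj => not_not.mp (Nat.find_min hPex hj)
  have him : i ≤ m := Nat.find_min' hPex (by rw [hDm]; exact hbt)
  have hipos : 0 < i := by
    rcases Nat.eq_zero_or_pos i with e | e
    · exact absurd (e ▸ hD0) hi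
    · exact e
  have hprev : D (i - 1) = ⊥ := hmin (i - 1) (by omega)
  have hsucc : i - 1 + 1 = i := by omega
  refine ⟨D i, hi, by simp only [hD]; exact hinvc _, ?_, ?_⟩
  · have := hDstep (i - 1) (by omega)
    rw [hsucc, hprev] at this
    exact this
  · have := Stmt17Aux.chain_main htrans K ⟨k₀, hk₀⟩ (m - i) (fun j => D (i + j))
      (fun a b hab => hDmono (by omega))
      (by show D (i + (m - i)) = ⊤; rw [show i + (m - i) = m by omega, hDm])
      (fun j => by simp only [hD]; exact hinvc _)
      (fun j hj => hDstep (i + j) (by omega))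
    exact this
end

section
/- Let X be a transitive G-space such that: (1) every quotient G-space of X (i.e. every quotient X/E by a G-invariant equivalence relation E) has the semi-Hajós property, and (2) X admits no strictly increasing infinite sequence (E_n)_{n∈ω} of G-invariant equivalence relations. Then every kaleidoscopical configuration K ⊆ X is splittable. -/
open Pointwise

universe u v

/-- `K` is `E`-saturated: `[K]_E = K`; such sets correspond to the subsets of the
quotient `G`-space `X/E`. -/
def Saturated {X : Type u} (E : Setoid X) (K : Set X) : Prop :=
  ∀ x ∈ K, ∀ y, E.r x y → y ∈ K

/-- The quotient `G`-space `X/E` by a `G`-invariant equivalence relation `E` has the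
semi-Hajós property.  Subsets of `X/E` are encoded by `E`-saturated subsets `K ⊆ X`,
`G`-invariant equivalence relations on `X/E` different from the diagonal correspond to
`G`-invariant equivalence relations `F` on `X` with `E ⊆ F`, `F ≠ E`, the relations
"`K/E` is `(F/E)`-parallel (orthogonal) in `X/E`" translate to "`K` is `F/E`-parallel
(orthogonal) in `X`", and the quotient `(X/E)/(F/E)` is `X/F`. -/
def SemiHajosQuot (G : Type v) [Group G] {X : Type u} [MulAction G X]
    (E : Setoid X) : Prop :=
  ∀ K : Set X, Saturated E K → K ≠ Set.univ → KaleidoscopicalQuot G E K →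
    ∃ F : Setoid X, E ≤ F ∧ F ≠ E ∧ SetoidInvariant G F ∧
      (ParallelRel K E F ∨ OrthogonalRel K E F) ∧ KaleidoscopicalQuot G F K

/-!
Grow a chain `Δ_X = E₀ < E₁ < ⋯` of `G`-invariant equivalence relations along which `K` splits,
keeping `K/Eᵢ` kaleidoscopical in `X/Eᵢ`. While the saturation `[K]_E` is a proper subset of `X`,
the semi-Hajós property of `X/E`, applied to `[K]_E`, supplies the next relation `F > E`; since
`E ≤ F`, the sets `K` and `[K]_E` have the same image in `X/F`, so `K/F` is again kaleidoscopical.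
By the ascending chain condition the process stops, i.e. `[K]_E = X` for some `E`, and then `K`
is `(X × X)/E`-parallel, which closes the chain.
-/

section Saturation

variable {X : Type u} {E F : Setoid X} {K : Set X}

def saturation (E : Setoid X) (K : Set X) : Set X := {y | ∃ k ∈ K, E.r k y}

lemma subset_saturation : K ⊆ saturation E K := fun k hk => ⟨k, hk, E.refl k⟩

lemma saturation_saturation : saturation E (saturation E K) = saturation E K :=
  Set.Subset.antisymm (fun _ ⟨_, ⟨k, hk, hk'⟩, h⟩ => ⟨k, hk, E.trans hk' h⟩) subset_saturation

lemma saturated_saturation : Saturated E (saturation E K) :=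
  fun _ ⟨k, hk, hkx⟩ _ hxy => ⟨k, hk, E.trans hkx hxy⟩

lemma ParallelRel.of_saturation (h : ParallelRel (saturation E K) E F) : ParallelRel K E F :=
  fun x hx => by
    have h' : saturation E (saturation E K) ∩ _ = _ := h x (subset_saturation hx)
    rwa [saturation_saturation] at h'

lemma OrthogonalRel.of_saturation (h : OrthogonalRel (saturation E K) E F) :
    OrthogonalRel K E F :=
  fun x hx => by
    have h' : saturation E (saturation E K) ∩ _ = _ := h x (subset_saturation hx)
    rwa [saturation_saturation] at h'

lemma parallelRel_top_of_saturation_eq_univ (h : saturation E K = Set.univ) :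
    ParallelRel K E ⊤ := fun _ _ => by
  change saturation E K ∩ _ = _
  rw [h, Set.univ_inter]

end Saturation

section GSpace

variable {G : Type v} [Group G] {X : Type u} [MulAction G X] {E F : Setoid X} {K : Set X}

lemma setoidInvariant_bot : SetoidInvariant G (⊥ : Setoid X) :=
  fun g _ _ (h : _ = _) => congrArg (g • ·) h

lemma setoidInvariant_top : SetoidInvariant G (⊤ : Setoid X) := fun _ _ _ _ => trivial

lemma image_mk_smul_saturation (hF : SetoidInvariant G F) (hEF : E ≤ F) (g : G) :
    Quotient.mk F '' (g • saturation E K) = Quotient.mk F '' (g • K) := by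
  refine Set.Subset.antisymm ?_ (Set.image_mono (Set.smul_set_mono subset_saturation))
  rintro _ ⟨_, ⟨y, ⟨k, hk, hky⟩, rfl⟩, rfl⟩
  exact ⟨g • k, Set.smul_mem_smul_set hk, Quotient.sound (hF g k y (hEF hky))⟩

lemma kaleidoscopicalQuot_saturation_iff (hF : SetoidInvariant G F) (hEF : E ≤ F) :
    KaleidoscopicalQuot G F (saturation E K) ↔ KaleidoscopicalQuot G F K := by
  simp only [KaleidoscopicalQuot, image_mk_smul_saturation hF hEF]

lemma Kaleidoscopical.kaleidoscopicalQuot_bot (hK : Kaleidoscopical G K) :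
    KaleidoscopicalQuot G ⊥ K := by
  obtain ⟨C, χ, hχ, hbij⟩ := hK
  let e := Setoid.quotientBotEquiv (α := X)
  refine ⟨C, χ ∘ e, hχ.comp e.surjective, fun g => (hbij g).comp ?_⟩
  have he : e '' (Quotient.mk ⊥ '' (g • K)) = g • K := by
    rw [Set.image_image]
    exact Set.image_id' _
  simpa only [he] using e.injective.injOn.bijOn_image (s := Quotient.mk ⊥ '' (g • K))

end GSpace

section Chain

variable {G : Type v} [Group G] {X : Type u} [MulAction G X] {E F : Setoid X} {K : Set X}

variable (G) in
def SplitsUpTo (K : Set X) (F : Setoid X) : Prop :=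
  ∃ (m : ℕ) (E : Fin (m + 1) → Setoid X), Monotone E ∧ E 0 = ⊥ ∧ E (Fin.last m) = F ∧
    (∀ i, SetoidInvariant G (E i)) ∧
    ∀ i : Fin m, ParallelRel K (E i.castSucc) (E i.succ) ∨
      OrthogonalRel K (E i.castSucc) (E i.succ)

lemma splitsUpTo_bot : SplitsUpTo G K ⊥ :=
  ⟨0, fun _ => ⊥, monotone_const, rfl, rfl, fun _ => setoidInvariant_bot, Fin.elim0⟩

lemma SplitsUpTo.snoc (h : SplitsUpTo G K E) (hEF : E ≤ F) (hF : SetoidInvariant G F)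
    (hstep : ParallelRel K E F ∨ OrthogonalRel K E F) : SplitsUpTo G K F := by
  obtain ⟨m, C, hmono, h0, hlast, hinv, hsteps⟩ := h
  refine ⟨m + 1, Fin.snoc C F, ?_, ?_, Fin.snoc_last _ _, ?_, ?_⟩
  · rw [← Fin.insertNth_last']
    exact Fin.insertNth_last_monotone hmono F (hlast ▸ hEF)
  · rw [← Fin.castSucc_zero, Fin.snoc_castSucc, h0]
  · exact Fin.lastCases (by simpa using hF) (fun i => by simpa using hinv i)
  · refine Fin.lastCases (by simpa [hlast] using hstep) fun i => ?_
    rw [Fin.succ_castSucc, Fin.snoc_castSucc, Fin.snoc_castSucc]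
    exact hsteps i

lemma SplitsUpTo.splittable_of_saturation_eq_univ (h : SplitsUpTo G K E)
    (hE : saturation E K = Set.univ) : Splittable G K :=
  h.snoc le_top setoidInvariant_top (Or.inl (parallelRel_top_of_saturation_eq_univ hE))

lemma SplitsUpTo.exists_gt (h : SplitsUpTo G K E) (hE : SetoidInvariant G E)
    (hSH : SemiHajosQuot G E) (hK : KaleidoscopicalQuot G E K)
    (hproper : saturation E K ≠ Set.univ) :
    ∃ F, (SetoidInvariant G F ∧ SplitsUpTo G K F ∧ KaleidoscopicalQuot G F K) ∧ E < F := by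
  obtain ⟨F, hEF, hFE, hF, hstep, hKF⟩ := hSH (saturation E K) saturated_saturation hproper
    ((kaleidoscopicalQuot_saturation_iff hE le_rfl).2 hK)
  exact ⟨F, ⟨hF, h.snoc hEF hF (hstep.imp ParallelRel.of_saturation OrthogonalRel.of_saturation),
    (kaleidoscopicalQuot_saturation_iff hF hEF).1 hKF⟩, lt_of_le_of_ne hEF (Ne.symm hFE)⟩

end Chain

lemma exists_strictMono_of_forall_exists_gt {α : Type*} [Preorder α] {P : α → Prop} {a : α}
    (ha : P a) (h : ∀ x, P x → ∃ y, P y ∧ x < y) :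
    ∃ f : ℕ → α, (∀ n, P (f n)) ∧ StrictMono f := by
  have : NoMaxOrder {x // P x} :=
    ⟨fun ⟨x, hx⟩ => let ⟨y, hy, hxy⟩ := h x hx; ⟨⟨y, hy⟩, hxy⟩⟩
  obtain ⟨f, hf, -⟩ := Nat.exists_strictMono' (⟨a, ha⟩ : {x // P x})
  exact ⟨fun n => f n, fun n => (f n).2, (Subtype.strictMono_coe _).comp hf⟩

theorem stmt18_general {G : Type v} [Group G] {X : Type u} [MulAction G X]
    (h1 : ∀ E : Setoid X, SetoidInvariant G E → SemiHajosQuot G E)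
    (h2 : ¬∃ E : ℕ → Setoid X, (∀ n, SetoidInvariant G (E n)) ∧ StrictMono E) :
    ∀ K : Set X, Kaleidoscopical G K → Splittable G K := by
  intro K hK
  by_contra hns
  obtain ⟨E, hE, hmono⟩ := exists_strictMono_of_forall_exists_gt
    (P := fun E => SetoidInvariant G E ∧ SplitsUpTo G K E ∧ KaleidoscopicalQuot G E K)
    ⟨setoidInvariant_bot, splitsUpTo_bot, hK.kaleidoscopicalQuot_bot⟩
    fun E ⟨hE, hsplit, hKE⟩ => hsplit.exists_gt hE (h1 E hE) hKE
      fun hu => hns (hsplit.splittable_of_saturation_eq_univ hu)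
  exact h2 ⟨E, fun n => (hE n).1, hmono⟩

/-- Let `X` be a transitive `G`-space such that (1) every quotient
`G`-space of `X` has the semi-Hajós property, and (2) `X` admits no strictly increasing
infinite sequence of `G`-invariant equivalence relations. Then every kaleidoscopical
configuration `K ⊆ X` is splittable. -/
theorem stmt18 {G : Type v} [Group G] {X : Type u} [MulAction G X]
    (htrans : ∀ x y : X, ∃ g : G, g • x = y)
    (h1 : ∀ E : Setoid X, SetoidInvariant G E → SemiHajosQuot G E)
    (h2 : ¬∃ E : ℕ → Setoid X, (∀ n, SetoidInvariant G (E n)) ∧ StrictMono E) :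
    ∀ K : Set X, Kaleidoscopical G K → Splittable G K :=
  stmt18_general h1 h2
end
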